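/- arXiv:0705.3280 — 9 statements merged into one kernel-verified Lean document; each statement's English description precedes it below -/
import Mathlib

section
/- Let F : ℝ → ℂ be a measurable function such that F(λ) ≠ 0 for almost every λ, and suppose there exists ε > 0 such that the set {λ ∈ ℝ : |F(λ)| ≤ ε} has finite Lebesgue measure. Then for every t > 0 there exists a constant C_t > 0 such that for all f ∈ L²(ℝ) supported in [0, t], one has ∫_ℝ |F(λ)|² |f̂(λ)|² dλ ≥ C_t ‖f‖²_{L²}. -/
/-
By Plancherel, `∫ |f̂|² = 2π ‖f‖²`, while Cauchy–Schwarz on `[0, t]` gives the pointwise bound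
`|f̂(λ)|² ≤ t ‖f‖²`. Since `F ≠ 0` a.e. and one sublevel set of `|F|` has finite measure, the
sublevel sets `S_δ = {|F| ≤ δ}` have measure tending to `0`; choose `δ` with `|S_δ| ≤ π / t`. Then
`S_δ` carries at most `π ‖f‖²` of the mass of `|f̂|²`, so its complement carries at least
`π ‖f‖²`, where `|F|² ≥ δ²`. Hence one can take `C_t = π δ²`.

Plancherel for `f` supported in `(a, b]` reduces to Parseval on `(a, b]`: the values of `f̂` on a
coset `θ + (2π / (b - a)) ℤ` are, up to the factor `b - a`, the Fourier coefficients of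
`x ↦ f(x) e^{-iθx}`; integrating Parseval's identity over `θ` in one period gives `2π ‖f‖²`.
-/

open MeasureTheory Set Filter Topology
open scoped ENNReal NNReal

theorem MeasureTheory.sq_lintegral_le_measure_univ_mul_lintegral_sq {α : Type*}
    [MeasurableSpace α] {μ : Measure α} {g : α → ℝ≥0∞} (hg : AEMeasurable g μ) :
    (∫⁻ x, g x ∂μ) ^ 2 ≤ μ univ * ∫⁻ x, g x ^ 2 ∂μ := by
  have h := ENNReal.lintegral_mul_le_Lp_mul_Lq μ Real.HolderConjugate.two_two hg
    aemeasurable_const (g := 1)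
  simp only [Pi.one_apply, mul_one, ENNReal.one_rpow, lintegral_one] at h
  calc (∫⁻ x, g x ∂μ) ^ 2
      ≤ ((∫⁻ x, g x ^ (2 : ℝ) ∂μ) ^ (1 / 2 : ℝ) * μ univ ^ (1 / 2 : ℝ)) ^ 2 := by gcongr
    _ = μ univ * ∫⁻ x, g x ^ 2 ∂μ := by
      rw [mul_pow, ← ENNReal.rpow_two, ← ENNReal.rpow_two, ← ENNReal.rpow_mul,
        ← ENNReal.rpow_mul]
      norm_num [mul_comm]

theorem lintegral_eq_setLIntegral_Ioc_tsum_add_int_mul {G : ℝ → ℝ≥0∞} (hG : Measurable G) {h : ℝ}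
    (hh : 0 < h) : ∫⁻ x, G x = ∫⁻ θ in Ioc 0 h, ∑' n : ℤ, G (θ + n * h) := by
  have hdom := isAddFundamentalDomain_Ioc hh 0 volume
  rw [zero_add] at hdom
  have hbij : Function.Bijective
      (fun n : ℤ => (⟨n • h, AddSubgroup.zsmul_mem_zmultiples h n⟩ : AddSubgroup.zmultiples h)) :=
    ⟨fun m n hmn => (zsmul_left_strictMono hh).injective (congrArg Subtype.val hmn),
      fun ⟨_, n, hn⟩ => ⟨n, Subtype.ext hn⟩⟩
  rw [hdom.lintegral_eq_tsum'', ← (Equiv.ofBijective _ hbij).tsum_eq, ← lintegral_tsum]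
  · refine setLIntegral_congr_fun measurableSet_Ioc fun θ _ => tsum_congr fun n => ?_
    simp [zsmul_eq_mul, add_comm]
  · exact fun n => (hG.comp (measurable_const_add _)).aemeasurable

theorem exists_pos_measure_norm_le_lt {α E : Type*} [MeasurableSpace α] {μ : Measure α}
    [NormedAddCommGroup E] [MeasurableSpace E] [OpensMeasurableSpace E] {F : α → E}
    (hF : Measurable F) (hF0 : ∀ᵐ x ∂μ, F x ≠ 0) (hfin : ∃ ε > (0 : ℝ), μ {x | ‖F x‖ ≤ ε} < ⊤)
    {η : ℝ≥0∞} (hη : 0 < η) : ∃ δ > (0 : ℝ), μ {x | ‖F x‖ ≤ δ} < η := by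
  have hlim : Tendsto (fun δ : ℝ => μ {x | ‖F x‖ ≤ δ}) (𝓝[>] 0) (𝓝 0) := by
    have hInter : (⋂ δ > (0 : ℝ), {x | ‖F x‖ ≤ δ}) = {x | F x = 0} := by
      ext x
      simp only [mem_iInter, mem_ofPred_eq]
      exact ⟨fun h => norm_le_zero_iff.1
        (le_of_forall_pos_le_add fun δ hδ => by simpa using h δ hδ),
        fun h δ hδ => by simp [h, hδ.le]⟩
    have hnull : μ {x | F x = 0} = 0 := by simpa using ae_iff.1 hF0
    rw [← hnull, ← hInter]
    obtain ⟨ε, hε, hεfin⟩ := hfin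
    exact tendsto_measure_biInter_gt
      (fun δ _ => (measurableSet_le hF.norm measurable_const).nullMeasurableSet)
      (fun δ δ' _ hδδ' x hx => le_trans hx hδδ') ⟨ε, hε, hεfin.ne⟩
  obtain ⟨δ, hδη, hδ⟩ := ((hlim.eventually (gt_mem_nhds hη)).and self_mem_nhdsWithin).exists
  exact ⟨δ, hδ, hδη⟩

theorem MeasureTheory.MemLp.ofReal_integral_norm_sq {α E : Type*} [MeasurableSpace α]
    {μ : Measure α} [NormedAddCommGroup E] {f : α → E} (hf : MemLp f 2 μ) :
    ENNReal.ofReal (∫ x, ‖f x‖ ^ 2 ∂μ) = ∫⁻ x, ‖f x‖ₑ ^ 2 ∂μ := by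
  rw [ofReal_integral_eq_lintegral_ofReal hf.norm.integrable_sq
    (Eventually.of_forall fun x => sq_nonneg _)]
  simp only [ENNReal.ofReal_pow (norm_nonneg _), ofReal_norm]

theorem MeasureTheory.MemLp.integrable_of_ae_notMem_eq_zero {α E : Type*} [MeasurableSpace α]
    {μ : Measure α} [NormedAddCommGroup E] {f : α → E} {s : Set α} (hf : MemLp f 2 μ)
    (hs : μ s ≠ ⊤) (hsupp : ∀ᵐ x ∂μ, x ∉ s → f x = 0) : Integrable f μ :=
  haveI : Fact (μ s < ⊤) := ⟨hs.lt_top⟩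
  IntegrableOn.integrable_of_ae_notMem_eq_zero ((hf.restrict s).integrable one_le_two) hsupp

theorem MeasureTheory.mul_setLIntegral_compl_le_lintegral_mul {α : Type*} [MeasurableSpace α]
    {μ : Measure α} {S : Set α} (hS : MeasurableSet S) {w G : α → ℝ≥0∞} {c : ℝ≥0∞}
    (hw : ∀ x ∉ S, c ≤ w x) : c * ∫⁻ x in Sᶜ, G x ∂μ ≤ ∫⁻ x, w x * G x ∂μ :=
  calc c * ∫⁻ x in Sᶜ, G x ∂μ ≤ ∫⁻ x in Sᶜ, c * G x ∂μ := lintegral_const_mul_le _ _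
    _ ≤ ∫⁻ x in Sᶜ, w x * G x ∂μ :=
      setLIntegral_mono' hS.compl fun x hx => mul_le_mul_left (hw x hx) _
    _ ≤ ∫⁻ x, w x * G x ∂μ := setLIntegral_le_lintegral _ _

-- Angular-frequency normalization `∫ f(x) e^{-iλx} dx`, unlike Mathlib's `𝓕`.
noncomputable def angularFourierTransform (f : ℝ → ℂ) (l : ℝ) : ℂ :=
  ∫ x, f x * Complex.exp (-(Complex.I * l * x))

namespace angularFourierTransform

theorem norm_mul_exp (z : ℂ) (l x : ℝ) : ‖z * Complex.exp (-(Complex.I * l * x))‖ = ‖z‖ := by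
  simp [Complex.norm_exp]

theorem continuous {f : ℝ → ℂ} (hf : Integrable f) : Continuous (angularFourierTransform f) :=
  continuous_of_dominated
    (fun l => hf.aestronglyMeasurable.mul (by fun_prop : Continuous _).aestronglyMeasurable)
    (fun l => Eventually.of_forall fun x => (norm_mul_exp (f x) l x).le) hf.norm
    (Eventually.of_forall fun x => by fun_prop)

theorem enorm_sq_le_volume_mul_lintegral {f : ℝ → ℂ} {s : Set ℝ} (hs : MeasurableSet s)
    (hf : AEStronglyMeasurable f) (hsupp : ∀ᵐ x, x ∉ s → f x = 0) (l : ℝ) :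
    ‖angularFourierTransform f l‖ₑ ^ 2 ≤ volume s * ∫⁻ x, ‖f x‖ₑ ^ 2 := by
  have hrestrict : ∫⁻ x, ‖f x‖ₑ = ∫⁻ x in s, ‖f x‖ₑ := by
    rw [← lintegral_indicator hs]
    refine lintegral_congr_ae ?_
    filter_upwards [hsupp] with x hx
    by_cases hxs : x ∈ s <;> simp [hxs, hx]
  calc ‖angularFourierTransform f l‖ₑ ^ 2 ≤ (∫⁻ x, ‖f x‖ₑ) ^ 2 := by
        gcongr
        refine (enorm_integral_le_lintegral_enorm _).trans_eq (lintegral_congr fun x => ?_)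
        simp only [← ofReal_norm, norm_mul_exp]
    _ ≤ volume s * ∫⁻ x in s, ‖f x‖ₑ ^ 2 := by
        rw [hrestrict, ← Measure.restrict_apply_univ]
        exact sq_lintegral_le_measure_univ_mul_lintegral_sq hf.enorm.restrict
    _ ≤ volume s * ∫⁻ x, ‖f x‖ₑ ^ 2 := mul_le_mul_right (setLIntegral_le_lintegral _ _) _

theorem fourier_smul_mul_exp (T : ℝ) (n : ℤ) (z : ℂ) (θ x : ℝ) :
    fourier (-n) (x : AddCircle T) • (z * Complex.exp (-(Complex.I * θ * x))) =
      z * Complex.exp (-(Complex.I * ↑(θ + n * (2 * Real.pi / T)) * x)) := by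
  rw [fourier_coe_apply, smul_eq_mul, mul_left_comm, ← Complex.exp_add]
  congr 2
  push_cast
  field_simp
  ring

theorem fourierCoeffOn_mul_exp {f : ℝ → ℂ} {a b : ℝ} (hab : a < b)
    (hsupp : ∀ᵐ x, x ∉ Ioc a b → f x = 0) (θ : ℝ) (n : ℤ) :
    fourierCoeffOn hab (fun x => f x * Complex.exp (-(Complex.I * θ * x))) n =
      (1 / (b - a)) • angularFourierTransform f (θ + n * (2 * Real.pi / (b - a))) := by
  rw [fourierCoeffOn_eq_integral, intervalIntegral.integral_of_le hab.le]
  congr 1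
  simp only [fourier_smul_mul_exp]
  refine setIntegral_eq_integral_of_ae_compl_eq_zero ?_
  filter_upwards [hsupp] with x hx hxs
  simp [hx hxs]

theorem tsum_enorm_sq_add_int_mul {f : ℝ → ℂ} {a b : ℝ} (hab : a < b) (hf : MemLp f 2)
    (hsupp : ∀ᵐ x, x ∉ Ioc a b → f x = 0) (θ : ℝ) :
    ∑' n : ℤ, ‖angularFourierTransform f (θ + n * (2 * Real.pi / (b - a)))‖ₑ ^ 2 =
      ENNReal.ofReal (b - a) * ∫⁻ x, ‖f x‖ₑ ^ 2 := by
  have hba : 0 < b - a := sub_pos.2 hab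
  set g : ℝ → ℂ := fun x => f x * Complex.exp (-(Complex.I * θ * x))
  have hg : MemLp g 2 := hf.of_le
    (hf.aestronglyMeasurable.mul (by fun_prop : Continuous _).aestronglyMeasurable)
    (Eventually.of_forall fun x => (norm_mul_exp (f x) θ x).le)
  have hmass : ∫ x in a..b, ‖g x‖ ^ 2 = ∫ x, ‖f x‖ ^ 2 := by
    rw [intervalIntegral.integral_of_le hab.le]
    simp only [g, norm_mul_exp]
    refine setIntegral_eq_integral_of_ae_compl_eq_zero ?_
    filter_upwards [hsupp] with x hx hxs
    simp [hx hxs]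
  have hsum : HasSum
      (fun n : ℤ => ‖angularFourierTransform f (θ + n * (2 * Real.pi / (b - a)))‖ ^ 2)
      ((b - a) * ∫ x, ‖f x‖ ^ 2) := by
    have hparseval := (hasSum_sq_fourierCoeffOn hab (hg.restrict _)).mul_left ((b - a) ^ 2)
    rw [hmass, smul_eq_mul, ← mul_assoc, sq, mul_inv_cancel_right₀ hba.ne'] at hparseval
    refine hparseval.congr_fun fun n => ?_
    rw [fourierCoeffOn_mul_exp hab hsupp, norm_smul, Real.norm_of_nonneg (by positivity)]
    field_simp
  rw [← hf.ofReal_integral_norm_sq, ← ENNReal.ofReal_mul hba.le, ← hsum.tsum_eq,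
    ENNReal.ofReal_tsum_of_nonneg (fun _ => by positivity) hsum.summable]
  simp only [ENNReal.ofReal_pow (norm_nonneg _), ofReal_norm]

theorem lintegral_enorm_sq_eq {f : ℝ → ℂ} {a b : ℝ} (hab : a < b) (hf : MemLp f 2)
    (hsupp : ∀ᵐ x, x ∉ Ioc a b → f x = 0) :
    ∫⁻ l, ‖angularFourierTransform f l‖ₑ ^ 2 =
      ENNReal.ofReal (2 * Real.pi) * ∫⁻ x, ‖f x‖ₑ ^ 2 := by
  have hba : 0 < b - a := sub_pos.2 hab
  have hmeas : Measurable fun l => ‖angularFourierTransform f l‖ₑ ^ 2 :=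
    ((continuous (hf.integrable_of_ae_notMem_eq_zero (by simp) hsupp)).measurable.enorm).pow_const 2
  rw [lintegral_eq_setLIntegral_Ioc_tsum_add_int_mul hmeas
      (by positivity : 0 < 2 * Real.pi / (b - a)),
    setLIntegral_congr_fun measurableSet_Ioc fun θ _ => tsum_enorm_sq_add_int_mul hab hf hsupp θ,
    setLIntegral_const, Real.volume_Ioc, sub_zero, mul_right_comm, ← ENNReal.ofReal_mul hba.le,
    mul_div_cancel₀ _ hba.ne']

theorem ofReal_pi_mul_le_setLIntegral_compl {f : ℝ → ℂ} {a b : ℝ} (hab : a < b)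
    (hf : MemLp f 2) (hsupp : ∀ᵐ x, x ∉ Icc a b → f x = 0) {S : Set ℝ} (hS : MeasurableSet S)
    (hSvol : volume S ≤ ENNReal.ofReal (Real.pi / (b - a))) :
    ENNReal.ofReal Real.pi * ∫⁻ x, ‖f x‖ₑ ^ 2 ≤ ∫⁻ l in Sᶜ, ‖angularFourierTransform f l‖ₑ ^ 2 := by
  set N := ∫⁻ x, ‖f x‖ₑ ^ 2
  have hN : ENNReal.ofReal Real.pi * N ≠ ⊤ :=
    ENNReal.mul_ne_top ENNReal.ofReal_ne_top
      (hf.ofReal_integral_norm_sq.symm.trans_ne ENNReal.ofReal_ne_top)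
  have hS_le : ∫⁻ l in S, ‖angularFourierTransform f l‖ₑ ^ 2 ≤ ENNReal.ofReal Real.pi * N :=
    calc ∫⁻ l in S, ‖angularFourierTransform f l‖ₑ ^ 2 ≤ ∫⁻ _ in S, ENNReal.ofReal (b - a) * N :=
          setLIntegral_mono' hS fun l _ => by
            simpa [Real.volume_Icc] using
              enorm_sq_le_volume_mul_lintegral measurableSet_Icc hf.1 hsupp l
      _ ≤ ENNReal.ofReal (b - a) * N * ENNReal.ofReal (Real.pi / (b - a)) := by
          rw [setLIntegral_const]; gcongr
      _ = ENNReal.ofReal Real.pi * N := by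
          rw [mul_right_comm, ← ENNReal.ofReal_mul (sub_pos.2 hab).le,
            mul_div_cancel₀ _ (sub_pos.2 hab).ne']
  have hsupp' : ∀ᵐ x, x ∉ Ioc (a - 1) b → f x = 0 := by
    filter_upwards [hsupp] with x hx hxI
    exact hx fun h => hxI ⟨by linarith [h.1], h.2⟩
  have htotal := lintegral_enorm_sq_eq (by linarith : a - 1 < b) hf hsupp'
  rw [← lintegral_add_compl _ hS, two_mul, ENNReal.ofReal_add Real.pi_pos.le Real.pi_pos.le,
    add_mul] at htotal
  exact (ENNReal.add_le_add_iff_left hN).1 (htotal ▸ add_le_add hS_le le_rfl)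

end angularFourierTransform

/-- If `F : ℝ → ℂ` is measurable, nonzero a.e., and `{λ : |F(λ)| ≤ ε}` has finite measure for
some `ε > 0`, then for every `t > 0` there is `C > 0` such that for every `f ∈ L²(ℝ)`
supported in `[0, t]` one has `∫ |F(λ)|² |f̂(λ)|² dλ ≥ C ‖f‖²` (the inequality being trivial
when the left-hand side is infinite). -/
theorem stmt_1 (F : ℝ → ℂ) (hFmeas : Measurable F)
    (hFne : ∀ᵐ l ∂volume, F l ≠ 0)
    (hfin : ∃ ε > (0 : ℝ), volume {l : ℝ | ‖F l‖ ≤ ε} < ⊤) :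
    ∀ t > (0 : ℝ), ∃ C > (0 : ℝ), ∀ f : ℝ → ℂ, MemLp f 2 volume →
      (∀ᵐ x ∂volume, x ∉ Set.Icc 0 t → f x = 0) →
      ENNReal.ofReal (C * ∫ x : ℝ, ‖f x‖ ^ 2) ≤
        ∫⁻ l : ℝ, (‖F l‖₊ : ℝ≥0∞) ^ 2 *
          (‖∫ x : ℝ, f x * Complex.exp (-(Complex.I * (l : ℂ) * (x : ℂ)))‖₊ : ℝ≥0∞) ^ 2 := by
  intro t ht
  obtain ⟨δ, hδ, hSδ⟩ := exists_pos_measure_norm_le_lt hFmeas hFne hfin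
    (ENNReal.ofReal_pos.2 (by positivity : 0 < Real.pi / t))
  set S := {l | ‖F l‖ ≤ δ}
  have hS : MeasurableSet S := measurableSet_le hFmeas.norm measurable_const
  have hweight : ∀ l ∉ S, ENNReal.ofReal (δ ^ 2) ≤ ‖F l‖ₑ ^ 2 := fun l hl => by
    rw [← ofReal_norm, ← ENNReal.ofReal_pow (norm_nonneg _)]
    exact ENNReal.ofReal_le_ofReal (pow_le_pow_left₀ hδ.le (not_le.1 hl).le 2)
  refine ⟨δ ^ 2 * Real.pi, by positivity, fun f hf hsupp => ?_⟩
  calc ENNReal.ofReal (δ ^ 2 * Real.pi * ∫ x, ‖f x‖ ^ 2)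
      = ENNReal.ofReal (δ ^ 2) * (ENNReal.ofReal Real.pi * ∫⁻ x, ‖f x‖ₑ ^ 2) := by
        rw [mul_assoc, ENNReal.ofReal_mul (by positivity), ENNReal.ofReal_mul Real.pi_pos.le,
          hf.ofReal_integral_norm_sq]
    _ ≤ ENNReal.ofReal (δ ^ 2) * ∫⁻ l in Sᶜ, ‖angularFourierTransform f l‖ₑ ^ 2 := by
        gcongr
        exact angularFourierTransform.ofReal_pi_mul_le_setLIntegral_compl ht hf hsupp hS
          (by simpa using hSδ.le)
    _ ≤ ∫⁻ l, ‖F l‖ₑ ^ 2 * ‖angularFourierTransform f l‖ₑ ^ 2 :=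
        mul_setLIntegral_compl_le_lintegral_mul hS hweight
end

section
/- Let f, g, h ∈ L¹(0,1) with ∫₀¹ x|f(x)|² dx < ∞, ∫₀¹ x|g(x)|² dx < ∞, ∫₀¹ x|h(x)|² dx < ∞, and suppose f ∉ L²(0,1), h ∉ L²(0,1), and limsup_{t→0⁺} ‖h‖_{L²(t,1)} / ‖f‖_{L²(t,1)} = C < ∞. Regard f, g, h as functions on ℝ vanishing outside (0,1) and set g̃(x) = g(−x). Then lim_{t→0⁺} ‖h ∗ g̃‖_{L²(t,1)} / ‖f‖_{L²(t,1)} = 0, where (h ∗ g̃)(x) = ∫₀¹ g(r) h(x + r) dr. -/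
open MeasureTheory Filter Set
open scoped ENNReal Topology

/-!
Write `k = h ∗ g̃`. Cauchy–Schwarz with weight `|g|` gives
`|k(x)|² ≤ ‖g‖₁ ∫₀¹ |g(r)| |h(x + r)|² dr`, so by Tonelli and a translation
`‖k‖²_{L²(t,1)} ≤ ‖g‖₁ ∫₀¹ |g(r)| ‖h‖²_{L²(t+r,1)} dr`. Splitting at `r = δ` bounds this by
`‖g‖₁ ‖g‖_{L¹(0,δ)} ‖h‖²_{L²(t,1)} + ‖g‖₁² ‖h‖²_{L²(δ,1)}`, and the last term is finite because
`∫ x |h|² < ∞`. Divided by `‖f‖_{L²(t,1)} → ∞`, with `‖h‖_{L²(t,1)} / ‖f‖_{L²(t,1)}` bounded,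
the quotient is eventually at most a multiple of `(‖g‖₁ ‖g‖_{L¹(0,δ)})^{1/2}`, which vanishes
as `δ → 0`.
-/

theorem Real.sqrt_add_le_add_sqrt {a b : ℝ} (ha : 0 ≤ a) (hb : 0 ≤ b) : √(a + b) ≤ √a + √b :=
  Real.sqrt_le_iff.2 ⟨by positivity, by
    nlinarith [Real.sq_sqrt ha, Real.sq_sqrt hb, Real.sqrt_nonneg a, Real.sqrt_nonneg b]⟩

theorem lintegral_mul_sq_le {α : Type*} [MeasurableSpace α] {μ : Measure α} {a b : α → ℝ≥0∞}
    (ha : AEMeasurable a μ) (hb : AEMeasurable b μ) :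
    (∫⁻ x, a x * b x ∂μ) ^ 2 ≤ (∫⁻ x, a x ∂μ) * ∫⁻ x, a x * b x ^ 2 ∂μ := by
  have hhalf : ∀ c : ℝ≥0∞, (c ^ (2⁻¹ : ℝ)) ^ 2 = c := fun c => by
    simpa using ENNReal.rpow_inv_natCast_pow (n := 2) two_ne_zero (x := c)
  have hsplit : ∀ x, a x ^ (2⁻¹ : ℝ) * (a x * b x ^ 2) ^ (2⁻¹ : ℝ) = a x * b x := fun x => by
    rw [ENNReal.mul_rpow_of_nonneg _ _ (by norm_num), ← mul_assoc, ← sq, hhalf]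
    simpa using congrArg (a x * ·) (ENNReal.pow_rpow_inv_natCast (n := 2) two_ne_zero (x := b x))
  have holder := ENNReal.lintegral_mul_norm_pow_le ha (ha.mul (hb.pow_const 2))
    (p := 2⁻¹) (q := 2⁻¹) (by norm_num) (by norm_num) (by norm_num)
  simp only [Pi.mul_apply, hsplit] at holder
  calc (∫⁻ x, a x * b x ∂μ) ^ 2
      ≤ ((∫⁻ x, a x ∂μ) ^ (2⁻¹ : ℝ) * (∫⁻ x, a x * b x ^ 2 ∂μ) ^ (2⁻¹ : ℝ)) ^ 2 := by gcongr
    _ = (∫⁻ x, a x ∂μ) * ∫⁻ x, a x * b x ^ 2 ∂μ := by rw [mul_pow, hhalf, hhalf]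

section

variable {α E : Type*} [MeasurableSpace α] {μ : Measure α} [NormedAddCommGroup E]

theorem integral_norm_sq_le_toReal_lintegral (u : α → E) :
    ∫ x, ‖u x‖ ^ 2 ∂μ ≤ (∫⁻ x, ‖u x‖ₑ ^ 2 ∂μ).toReal := by
  refine ((le_abs_self _).trans_eq (Real.norm_eq_abs _).symm).trans
    ((norm_integral_le_lintegral_norm _).trans_eq ?_)
  simp_rw [Real.norm_of_nonneg (sq_nonneg _), ENNReal.ofReal_pow (norm_nonneg _), ofReal_norm]

theorem integral_norm_sq_eq_toReal_lintegral {u : α → E} (hu : AEStronglyMeasurable u μ) :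
    ∫ x, ‖u x‖ ^ 2 ∂μ = (∫⁻ x, ‖u x‖ₑ ^ 2 ∂μ).toReal := by
  rw [integral_eq_lintegral_of_nonneg_ae (f := fun x => ‖u x‖ ^ 2)
    (ae_of_all _ fun x => by positivity) (hu.norm.pow 2)]
  simp_rw [ENNReal.ofReal_pow (norm_nonneg _), ofReal_norm]

end

theorem tendsto_div_zero_of_le_mul_add {ι : Type*} {l : Filter ι} {N H F : ι → ℝ}
    (hN : ∀ t, 0 ≤ N t) (hF : Tendsto F l atTop)
    (hHF : IsBoundedUnder (· ≤ ·) l fun t => H t / F t)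
    (hNH : ∀ ε > 0, ∃ K, ∀ᶠ t in l, N t ≤ ε * H t + K) :
    Tendsto (fun t => N t / F t) l (𝓝 0) := by
  obtain ⟨B, hB⟩ := hHF
  rw [eventually_map] at hB
  set B' := max B 1
  have hB' : 0 < B' := lt_max_of_lt_right one_pos
  rw [NormedAddGroup.tendsto_nhds_zero]
  intro ε hε
  obtain ⟨K, hK⟩ := hNH (ε / (2 * B')) (by positivity)
  filter_upwards [hB, hK, hF.eventually_gt_atTop 0, hF.eventually_gt_atTop (2 * K / ε)]
    with t hBt hKt hF0 hFK
  rw [Real.norm_of_nonneg (div_nonneg (hN t) hF0.le), div_lt_iff₀ hF0]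
  have hH : H t ≤ B' * F t := (div_le_iff₀ hF0).1 (hBt.trans (le_max_left _ _))
  have hK' : 2 * K < ε * F t := by
    rw [div_lt_iff₀ hε] at hFK
    linarith
  calc N t ≤ ε / (2 * B') * H t + K := hKt
    _ ≤ ε / (2 * B') * (B' * F t) + K := by gcongr
    _ = ε * F t / 2 + K := by field_simp
    _ < ε * F t := by linarith

theorem tendsto_setLIntegral_Ioo_nhdsGT (u : ℝ → ℝ≥0∞) (a b : ℝ) :
    Tendsto (fun t => ∫⁻ x in Ioo t b, u x) (𝓝[>] a) (𝓝 (∫⁻ x in Ioo a b, u x)) := by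
  have : (atBot : Filter (Ioi a)).IsCountablyGenerated := by
    rw [← comap_coe_Ioi_nhdsGT a]
    infer_instance
  have hunion : ⋃ t : Ioi a, Ioo (t : ℝ) b = Ioo a b := by
    ext x
    simp only [mem_iUnion, mem_Ioo]
    constructor
    · rintro ⟨t, htx, hxb⟩
      exact ⟨t.2.trans htx, hxb⟩
    · rintro ⟨hax, hxb⟩
      obtain ⟨c, hac, hcx⟩ := exists_between hax
      exact ⟨⟨c, hac⟩, hcx, hxb⟩
  have hlim := tendsto_measure_iUnion_atBot (μ := volume.withDensity u)
    (s := fun t : Ioi a => Ioo (t : ℝ) b) fun s t hst => Ioo_subset_Ioo_left hst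
  rw [hunion] at hlim
  rw [← tendsto_comp_coe_Ioi_atBot]
  simpa only [Function.comp_def, withDensity_apply u measurableSet_Ioo] using hlim

theorem tendsto_setLIntegral_Ioo_nhdsGT_zero {u : ℝ → ℝ≥0∞} (hu : ∫⁻ x, u x ≠ ⊤) (a : ℝ) :
    Tendsto (fun δ => ∫⁻ x in Ioo a δ, u x) (𝓝[>] a) (𝓝 0) := by
  refine tendsto_setLIntegral_zero hu ?_
  simp only [Function.comp_def, Real.volume_Ioo]
  simpa using ENNReal.tendsto_ofReal
    (tendsto_sub_nhds_zero_iff.2 (tendsto_id.mono_left nhdsWithin_le_nhds))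

theorem tendsto_setIntegral_Ioo_norm_sq_atTop {E : Type*} [NormedAddCommGroup E] {u : ℝ → E}
    {a b : ℝ} (hu : AEStronglyMeasurable u) (htop : ∫⁻ x in Ioo a b, ‖u x‖ₑ ^ 2 = ⊤)
    (hfin : ∀ t > a, ∫⁻ x in Ioo t b, ‖u x‖ₑ ^ 2 ≠ ⊤) :
    Tendsto (fun t => ∫ x in Ioo t b, ‖u x‖ ^ 2) (𝓝[>] a) atTop := by
  have hlim := tendsto_setLIntegral_Ioo_nhdsGT (fun x => ‖u x‖ₑ ^ 2) a b
  rw [htop, ENNReal.tendsto_nhds_top_iff_nnreal] at hlim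
  refine tendsto_atTop.2 fun M => ?_
  filter_upwards [hlim M.toNNReal, self_mem_nhdsWithin] with t hM ht
  rw [integral_norm_sq_eq_toReal_lintegral hu.restrict]
  calc M ≤ M.toNNReal := Real.le_coe_toNNReal M
    _ ≤ _ := by simpa using ENNReal.toReal_mono (hfin t ht) hM.le

theorem setLIntegral_Ioo_ne_top_of_weighted {u : ℝ → ℝ≥0∞} {s b : ℝ} (hs : 0 < s)
    (hw : ∫⁻ y in Ioo 0 b, ENNReal.ofReal y * u y ≠ ⊤) : ∫⁻ y in Ioo s b, u y ≠ ⊤ := by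
  have hs' : ENNReal.ofReal s ≠ 0 := by simpa using hs
  have hpt : ∀ y ∈ Ioo s b, u y ≤ (ENNReal.ofReal s)⁻¹ * (ENNReal.ofReal y * u y) := by
    intro y hy
    rw [← mul_assoc]
    refine le_mul_of_one_le_left zero_le ?_
    rw [← ENNReal.inv_mul_cancel hs' ENNReal.ofReal_ne_top]
    gcongr
    exact hy.1.le
  refine ne_top_of_le_ne_top ?_ (setLIntegral_mono' measurableSet_Ioo hpt)
  rw [lintegral_const_mul' _ _ (by simp [hs'])]
  exact ENNReal.mul_ne_top (by simp [hs]) (ne_top_of_le_ne_top hw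
    (lintegral_mono_set (Ioo_subset_Ioo_left hs.le)))

theorem setLIntegral_Ioo_comp_add_le {u : ℝ → ℝ≥0∞} {b : ℝ} (hu : ∀ y, b ≤ y → u y = 0)
    (a r : ℝ) : ∫⁻ x in Ioo a b, u (x + r) ≤ ∫⁻ y in Ioo (a + r) b, u y := by
  have htrans : ∫⁻ x in Ioo a b, u (x + r) = ∫⁻ y in Ioo (a + r) (b + r), u y := by
    have := (measurePreserving_add_right volume r).setLIntegral_comp_preimage_emb
      (measurableEmbedding_addRight r) u (Ioo (a + r) (b + r))
    rwa [preimage_add_const_Ioo, add_sub_cancel_right, add_sub_cancel_right] at this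
  have hzero : ∫⁻ y in Ici b, u y = 0 := by
    rw [setLIntegral_congr_fun measurableSet_Ici hu, lintegral_zero]
  calc ∫⁻ x in Ioo a b, u (x + r) = ∫⁻ y in Ioo (a + r) (b + r), u y := htrans
    _ ≤ ∫⁻ y in Ioo (a + r) b ∪ Ici b, u y :=
        lintegral_mono_set fun y hy => (lt_or_ge y b).imp (fun h => ⟨hy.1, h⟩) id
    _ ≤ (∫⁻ y in Ioo (a + r) b, u y) + ∫⁻ y in Ici b, u y := lintegral_union_le _ _ _
    _ = ∫⁻ y in Ioo (a + r) b, u y := by rw [hzero, add_zero]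

theorem aemeasurable_mul_comp_add {φ u : ℝ → ℝ≥0∞} (hφ : AEMeasurable φ) (hu : AEMeasurable u)
    (s s' : Set ℝ) :
    AEMeasurable (fun p : ℝ × ℝ => φ p.2 * u (p.1 + p.2))
      ((volume.restrict s).prod (volume.restrict s')) := by
  rw [Measure.prod_restrict]
  exact (hφ.comp_snd.mul (hu.comp_quasiMeasurePreserving
    (quasiMeasurePreserving_add volume volume))).restrict

theorem lintegral_lintegral_mul_comp_add_le {φ u : ℝ → ℝ≥0∞} (hφ : AEMeasurable φ)
    (hu : AEMeasurable u) {b : ℝ} (hu0 : ∀ y, b ≤ y → u y = 0) (a : ℝ) (s : Set ℝ) :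
    ∫⁻ x in Ioo a b, ∫⁻ r in s, φ r * u (x + r)
      ≤ ∫⁻ r in s, φ r * ∫⁻ y in Ioo (a + r) b, u y := by
  rw [lintegral_lintegral_swap (aemeasurable_mul_comp_add hφ hu _ _)]
  refine lintegral_mono fun r => ?_
  have hur : AEMeasurable (fun x => u (x + r)) (volume.restrict (Ioo a b)) :=
    (hu.comp_quasiMeasurePreserving
      (measurePreserving_add_right volume r).quasiMeasurePreserving).restrict
  rw [lintegral_const_mul'' _ hur]
  gcongr φ r * ?_
  exact setLIntegral_Ioo_comp_add_le hu0 a r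

theorem setLIntegral_mul_antitone_add_le {w Ψ : ℝ → ℝ≥0∞} {b : ℝ}
    (hw : AEMeasurable w (volume.restrict (Ioo 0 b))) (hΨ : Antitone Ψ) {t : ℝ} (ht : 0 ≤ t)
    (δ : ℝ) :
    ∫⁻ r in Ioo 0 b, w r * Ψ (t + r)
      ≤ (∫⁻ r in Ioo 0 δ, w r) * Ψ t + (∫⁻ r in Ioo 0 b, w r) * Ψ δ := by
  have hpt : ∀ r ∈ Ioo 0 b, w r * Ψ (t + r) ≤ (Ioo 0 δ).indicator w r * Ψ t + w r * Ψ δ := by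
    intro r hr
    rcases lt_or_ge r δ with hrδ | hδr
    · rw [indicator_of_mem (show r ∈ Ioo 0 δ from ⟨hr.1, hrδ⟩)]
      refine le_add_right ?_
      gcongr
      exact hΨ (by linarith [hr.1])
    · refine le_add_left ?_
      gcongr
      exact hΨ (by linarith)
  have hwδ : AEMeasurable ((Ioo 0 δ).indicator w) (volume.restrict (Ioo 0 b)) :=
    hw.indicator measurableSet_Ioo
  calc ∫⁻ r in Ioo 0 b, w r * Ψ (t + r)
      ≤ ∫⁻ r in Ioo 0 b, ((Ioo 0 δ).indicator w r * Ψ t + w r * Ψ δ) :=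
        setLIntegral_mono' measurableSet_Ioo hpt
    _ = (∫⁻ r in Ioo 0 b, (Ioo 0 δ).indicator w r) * Ψ t + (∫⁻ r in Ioo 0 b, w r) * Ψ δ := by
        rw [lintegral_add_left' (hwδ.mul_const _), lintegral_mul_const'' _ hwδ,
          lintegral_mul_const'' _ hw]
    _ ≤ (∫⁻ r in Ioo 0 δ, w r) * Ψ t + (∫⁻ r in Ioo 0 b, w r) * Ψ δ := by
        gcongr ?_ * _ + _
        exact (setLIntegral_le_lintegral _ _).trans_eq (lintegral_indicator measurableSet_Ioo _)

theorem setLIntegral_sq_lintegral_mul_comp_add_le {φ ψ : ℝ → ℝ≥0∞} (hφ : AEMeasurable φ)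
    (hψ : AEMeasurable ψ) (hψ1 : ∀ y, 1 ≤ y → ψ y = 0) {t : ℝ} (ht : 0 ≤ t) (δ : ℝ) :
    ∫⁻ x in Ioo t 1, (∫⁻ r in Ioo 0 1, φ r * ψ (x + r)) ^ 2
      ≤ (∫⁻ r in Ioo 0 1, φ r) *
        ((∫⁻ r in Ioo 0 δ, φ r) * (∫⁻ y in Ioo t 1, ψ y ^ 2)
          + (∫⁻ r in Ioo 0 1, φ r) * ∫⁻ y in Ioo δ 1, ψ y ^ 2) := by
  set Φ := ∫⁻ r in Ioo 0 1, φ r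
  have hψ2 : AEMeasurable fun y => ψ y ^ 2 := hψ.pow_const 2
  have hΨ : Antitone fun s => ∫⁻ y in Ioo s 1, ψ y ^ 2 := fun s s' hss' =>
    lintegral_mono_set (Ioo_subset_Ioo_left hss')
  calc ∫⁻ x in Ioo t 1, (∫⁻ r in Ioo 0 1, φ r * ψ (x + r)) ^ 2
      ≤ ∫⁻ x in Ioo t 1, Φ * ∫⁻ r in Ioo 0 1, φ r * ψ (x + r) ^ 2 :=
        lintegral_mono fun x => lintegral_mul_sq_le hφ.restrict
          (hψ.comp_quasiMeasurePreserving
            (measurePreserving_add_left volume x).quasiMeasurePreserving).restrict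
    _ = Φ * ∫⁻ x in Ioo t 1, ∫⁻ r in Ioo 0 1, φ r * ψ (x + r) ^ 2 :=
        lintegral_const_mul'' _ (aemeasurable_mul_comp_add hφ hψ2 _ _).lintegral_prod_right'
    _ ≤ Φ * ∫⁻ r in Ioo 0 1, φ r * ∫⁻ y in Ioo (t + r) 1, ψ y ^ 2 := by
        gcongr Φ * ?_
        exact lintegral_lintegral_mul_comp_add_le hφ hψ2 (fun y hy => by simp [hψ1 y hy]) t _
    _ ≤ _ := by
        gcongr Φ * ?_
        exact setLIntegral_mul_antitone_add_le hφ.restrict hΨ ht δ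

theorem sqrt_setIntegral_Ioo_norm_conv_sq_le {𝕜 : Type*} [RCLike 𝕜] {g h : ℝ → 𝕜}
    (hg : Integrable g) (hh : AEStronglyMeasurable h) (hh1 : ∀ y, 1 ≤ y → h y = 0)
    (hhfin : ∀ s > 0, ∫⁻ y in Ioo s 1, ‖h y‖ₑ ^ 2 ≠ ⊤) {t δ : ℝ} (ht : 0 < t) (hδ : 0 < δ) :
    √(∫ x in Ioo t 1, ‖∫ r in Ioo 0 1, g r * h (x + r)‖ ^ 2)
      ≤ √((∫⁻ r in Ioo 0 1, ‖g r‖ₑ) * ∫⁻ r in Ioo 0 δ, ‖g r‖ₑ).toReal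
          * √(∫ x in Ioo t 1, ‖h x‖ ^ 2)
        + √((∫⁻ r in Ioo 0 1, ‖g r‖ₑ) * (∫⁻ r in Ioo 0 1, ‖g r‖ₑ)
            * ∫⁻ y in Ioo δ 1, ‖h y‖ₑ ^ 2).toReal := by
  set Φ := ∫⁻ r in Ioo 0 1, ‖g r‖ₑ
  set Φδ := ∫⁻ r in Ioo 0 δ, ‖g r‖ₑ
  have hgfin : ∀ s, ∫⁻ r in s, ‖g r‖ₑ ≠ ⊤ := fun s =>
    ne_top_of_le_ne_top hg.2.ne (setLIntegral_le_lintegral _ _)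
  have hconv : ∀ x, ‖∫ r in Ioo 0 1, g r * h (x + r)‖ₑ
      ≤ ∫⁻ r in Ioo 0 1, ‖g r‖ₑ * ‖h (x + r)‖ₑ := fun x =>
    (enorm_integral_le_lintegral_enorm _).trans_eq (by simp_rw [enorm_mul])
  have hfin₁ : Φ * Φδ * ∫⁻ y in Ioo t 1, ‖h y‖ₑ ^ 2 ≠ ⊤ :=
    ENNReal.mul_ne_top (ENNReal.mul_ne_top (hgfin _) (hgfin _)) (hhfin t ht)
  have hfin₂ : Φ * Φ * ∫⁻ y in Ioo δ 1, ‖h y‖ₑ ^ 2 ≠ ⊤ :=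
    ENNReal.mul_ne_top (ENNReal.mul_ne_top (hgfin _) (hgfin _)) (hhfin δ hδ)
  have hA : ∫⁻ x in Ioo t 1, ‖∫ r in Ioo 0 1, g r * h (x + r)‖ₑ ^ 2
      ≤ Φ * Φδ * (∫⁻ y in Ioo t 1, ‖h y‖ₑ ^ 2) + Φ * Φ * ∫⁻ y in Ioo δ 1, ‖h y‖ₑ ^ 2 :=
    calc _ ≤ ∫⁻ x in Ioo t 1, (∫⁻ r in Ioo 0 1, ‖g r‖ₑ * ‖h (x + r)‖ₑ) ^ 2 := by
          gcongr with x
          exact hconv x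
      _ ≤ _ := setLIntegral_sq_lintegral_mul_comp_add_le hg.1.enorm hh.enorm
          (fun y hy => by simp [hh1 y hy]) ht.le δ
      _ = _ := by ring
  rw [integral_norm_sq_eq_toReal_lintegral hh.restrict, ← Real.sqrt_mul ENNReal.toReal_nonneg,
    ← ENNReal.toReal_mul]
  calc _ ≤ √(Φ * Φδ * (∫⁻ y in Ioo t 1, ‖h y‖ₑ ^ 2)
            + Φ * Φ * ∫⁻ y in Ioo δ 1, ‖h y‖ₑ ^ 2).toReal :=
        Real.sqrt_le_sqrt ((integral_norm_sq_le_toReal_lintegral _).trans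
          (ENNReal.toReal_mono (ENNReal.add_ne_top.2 ⟨hfin₁, hfin₂⟩) hA))
    _ ≤ _ := by
        rw [ENNReal.toReal_add hfin₁ hfin₂]
        exact Real.sqrt_add_le_add_sqrt ENNReal.toReal_nonneg ENNReal.toReal_nonneg

theorem stmt_4_general (f g h : ℝ → ℂ)
    (hh0 : ∀ x, x ∉ Set.Ioo (0 : ℝ) 1 → h x = 0)
    (hfi : Integrable f volume) (hgi : Integrable g volume) (hhi : Integrable h volume)
    (hfw : (∫⁻ x in Set.Ioo (0 : ℝ) 1, ENNReal.ofReal x * (‖f x‖₊ : ℝ≥0∞) ^ 2) < ⊤)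
    (hhw : (∫⁻ x in Set.Ioo (0 : ℝ) 1, ENNReal.ofReal x * (‖h x‖₊ : ℝ≥0∞) ^ 2) < ⊤)
    (hfL2 : (∫⁻ x in Set.Ioo (0 : ℝ) 1, (‖f x‖₊ : ℝ≥0∞) ^ 2) = ⊤)
    (hbdd : Filter.IsBoundedUnder (· ≤ ·) (𝓝[>] (0 : ℝ))
      (fun t => Real.sqrt (∫ x in Set.Ioo t 1, ‖h x‖ ^ 2) /
        Real.sqrt (∫ x in Set.Ioo t 1, ‖f x‖ ^ 2))) :
    Filter.Tendsto
      (fun t => Real.sqrt (∫ x in Set.Ioo t 1,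
          ‖∫ r in Set.Ioo (0 : ℝ) 1, g r * h (x + r)‖ ^ 2) /
        Real.sqrt (∫ x in Set.Ioo t 1, ‖f x‖ ^ 2))
      (𝓝[>] (0 : ℝ)) (𝓝 0) := by
  set Φ := ∫⁻ r in Ioo (0 : ℝ) 1, ‖g r‖ₑ
  have hΦ : Φ ≠ ⊤ := ne_top_of_le_ne_top hgi.2.ne (setLIntegral_le_lintegral _ _)
  have hsmall : Tendsto (fun δ => √((Φ * ∫⁻ r in Ioo 0 δ, ‖g r‖ₑ).toReal)) (𝓝[>] 0) (𝓝 0) := by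
    have hΦδ : Tendsto (fun δ => Φ * ∫⁻ r in Ioo 0 δ, ‖g r‖ₑ) (𝓝[>] 0) (𝓝 0) := by
      simpa using ENNReal.Tendsto.const_mul (tendsto_setLIntegral_Ioo_nhdsGT_zero hgi.2.ne 0)
        (Or.inr hΦ)
    simpa using ((ENNReal.tendsto_toReal ENNReal.zero_ne_top).comp hΦδ).sqrt
  refine tendsto_div_zero_of_le_mul_add (fun t => Real.sqrt_nonneg _)
    (Real.tendsto_sqrt_atTop.comp (tendsto_setIntegral_Ioo_norm_sq_atTop hfi.1 hfL2
      fun t ht => setLIntegral_Ioo_ne_top_of_weighted ht hfw.ne)) hbdd fun ε hε => ?_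
  obtain ⟨δ, hδε, hδ⟩ :=
    ((hsmall.eventually (eventually_le_nhds hε)).and self_mem_nhdsWithin).exists
  refine ⟨√((Φ * Φ * ∫⁻ y in Ioo δ 1, ‖h y‖ₑ ^ 2).toReal), ?_⟩
  filter_upwards [self_mem_nhdsWithin] with t ht
  refine (sqrt_setIntegral_Ioo_norm_conv_sq_le hgi hhi.1 (fun y hy => hh0 y (·.2.not_ge hy))
    (fun s hs => setLIntegral_Ioo_ne_top_of_weighted hs hhw.ne) ht hδ).trans ?_
  gcongr

/-- Lemma 6.3: let `f, g, h ∈ L¹(0,1)` (extended by zero to `ℝ`) with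
`∫₀¹ x|f|² , ∫₀¹ x|g|², ∫₀¹ x|h|² < ∞`, `f, h ∉ L²(0,1)`, and suppose
`limsup_{t→0⁺} ‖h‖_{L²(t,1)}/‖f‖_{L²(t,1)} = C < ∞`. Then
`lim_{t→0⁺} ‖h ∗ g̃‖_{L²(t,1)}/‖f‖_{L²(t,1)} = 0`, where
`(h ∗ g̃)(x) = ∫₀¹ g(r) h(x+r) dr`. -/
theorem stmt_4 (f g h : ℝ → ℂ)
    (hf0 : ∀ x, x ∉ Set.Ioo (0 : ℝ) 1 → f x = 0)
    (hg0 : ∀ x, x ∉ Set.Ioo (0 : ℝ) 1 → g x = 0)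
    (hh0 : ∀ x, x ∉ Set.Ioo (0 : ℝ) 1 → h x = 0)
    (hfi : Integrable f volume) (hgi : Integrable g volume) (hhi : Integrable h volume)
    (hfw : (∫⁻ x in Set.Ioo (0 : ℝ) 1, ENNReal.ofReal x * (‖f x‖₊ : ℝ≥0∞) ^ 2) < ⊤)
    (hgw : (∫⁻ x in Set.Ioo (0 : ℝ) 1, ENNReal.ofReal x * (‖g x‖₊ : ℝ≥0∞) ^ 2) < ⊤)
    (hhw : (∫⁻ x in Set.Ioo (0 : ℝ) 1, ENNReal.ofReal x * (‖h x‖₊ : ℝ≥0∞) ^ 2) < ⊤)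
    (hfL2 : (∫⁻ x in Set.Ioo (0 : ℝ) 1, (‖f x‖₊ : ℝ≥0∞) ^ 2) = ⊤)
    (hhL2 : (∫⁻ x in Set.Ioo (0 : ℝ) 1, (‖h x‖₊ : ℝ≥0∞) ^ 2) = ⊤)
    (C : ℝ)
    (hlimsup : Filter.limsup
      (fun t => Real.sqrt (∫ x in Set.Ioo t 1, ‖h x‖ ^ 2) /
        Real.sqrt (∫ x in Set.Ioo t 1, ‖f x‖ ^ 2)) (𝓝[>] (0 : ℝ)) = C)
    (hbdd : Filter.IsBoundedUnder (· ≤ ·) (𝓝[>] (0 : ℝ))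
      (fun t => Real.sqrt (∫ x in Set.Ioo t 1, ‖h x‖ ^ 2) /
        Real.sqrt (∫ x in Set.Ioo t 1, ‖f x‖ ^ 2))) :
    Filter.Tendsto
      (fun t => Real.sqrt (∫ x in Set.Ioo t 1,
          ‖∫ r in Set.Ioo (0 : ℝ) 1, g r * h (x + r)‖ ^ 2) /
        Real.sqrt (∫ x in Set.Ioo t 1, ‖f x‖ ^ 2))
      (𝓝[>] (0 : ℝ)) (𝓝 0) :=
  stmt_4_general f g h hh0 hfi hgi hhi hfw hhw hfL2 hbdd
end

section
/- Let 0 < γ ≤ 1 and let L : (0,∞) → (0,∞) be a measurable function slowly varying at 0, i.e. for every c > 0, L(cx)/L(x) → 1 as x → 0⁺. Suppose f(x) = x^{γ−1} L(x) is continuous, strictly decreasing, with lim_{x→0⁺} f(x) = ∞, lim_{x→∞} f(x) = 0 and ∫₀¹ f < ∞. Let U = ⋃_{n≥0} (b_{2n}, b_{2n+1}) be the bounded open set constructed from f by setting a₀ = 0, a_{2n−1} = a_{2n} = f⁻¹(n), b_n = a₀ + ⋯ + a_n. Then |(U + x) △ U| ≍ x^γ L(x) as x → 0⁺; that is, there exist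 constants a, b, c > 0 such that b·x^γ L(x) ≤ |(U + x) △ U| ≤ c·x^γ L(x) for all x ∈ (0, a). -/
/-!
Write `U = ⋃ₙ (cₙ, cₙ + ℓₙ)` with `ℓₙ = g (n + 1)` and `cₙ₊₁ = cₙ + 2ℓₙ`: every interval is
followed by a gap of the same length. The `n`-th interval contributes at most `2 min(x, ℓₙ)` to
`|(U + x) △ U|`, and if `x ≤ ℓₙ` its translate covers a piece of length `x` of the following gap.
Since `t < ℓₙ` forces `n + 1 < f t`, the layer-cake formula gives `∑ₙ min(x, ℓₙ) ≤ ∫₀ˣ f`, while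
`⌊f x⌋` intervals are at least `x` long. So `|(U + x) △ U|` lies between `x f(x) / 2` and
`2 ∫₀ˣ f`. Finally `∫₀ˣ f ≤ C x f(x) = C x^γ L(x)`: on the dyadic piece `(x/2^(k+1), x/2^k]`
the monotone `f` is at most `f (x/2^(k+1))`, and slow variation lets `L (x/2^k)` grow at most like
`ρ^k` for some `ρ < 2^γ`, so the pieces decay geometrically.
-/

open MeasureTheory Filter Set
open scoped ENNReal Topology

section ShiftedIntervals

lemma volume_symmDiff_Ioo_add_le (p ℓ : ℝ) {x : ℝ} (hx : 0 ≤ x) :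
    volume (symmDiff (Ioo (p + x) (p + ℓ + x)) (Ioo p (p + ℓ))) ≤
      2 * ENNReal.ofReal (min x ℓ) := by
  have hA : volume (Ioo (p + x) (p + ℓ + x) \ Ioo p (p + ℓ)) ≤ ENNReal.ofReal (min x ℓ) := by
    rw [ENNReal.ofReal_min]
    refine le_min ?_ ?_
    · calc _ ≤ volume (Ico (p + ℓ) (p + ℓ + x)) := measure_mono <| by
            rintro t ⟨⟨h1, h2⟩, h3⟩
            exact ⟨not_lt.1 fun h => h3 ⟨by linarith, h⟩, h2⟩
        _ = _ := by rw [Real.volume_Ico]; ring_nf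
    · calc _ ≤ volume (Ioo (p + x) (p + ℓ + x)) := measure_mono sdiff_subset
        _ = _ := by rw [Real.volume_Ioo]; ring_nf
  have hB : volume (Ioo p (p + ℓ) \ Ioo (p + x) (p + ℓ + x)) ≤ ENNReal.ofReal (min x ℓ) := by
    rw [ENNReal.ofReal_min]
    refine le_min ?_ ?_
    · calc _ ≤ volume (Ioc p (p + x)) := measure_mono <| by
            rintro t ⟨⟨h1, h2⟩, h3⟩
            exact ⟨h1, not_lt.1 fun h => h3 ⟨h, by linarith⟩⟩
        _ = _ := by rw [Real.volume_Ioc]; ring_nf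
    · calc _ ≤ volume (Ioo p (p + ℓ)) := measure_mono sdiff_subset
        _ = _ := by rw [Real.volume_Ioo]; ring_nf
  calc _ ≤ _ := measure_union_le _ _
    _ ≤ _ := add_le_add hA hB
    _ = _ := (two_mul _).symm

variable (c ℓ : ℕ → ℝ)

lemma volume_symmDiff_image_add_iUnion_Ioo_le {x : ℝ} (hx : 0 ≤ x) :
    volume (symmDiff ((fun u => u + x) '' ⋃ n, Ioo (c n) (c n + ℓ n))
        (⋃ n, Ioo (c n) (c n + ℓ n))) ≤ 2 * ∑' n, ENNReal.ofReal (min x (ℓ n)) := by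
  simp only [image_iUnion, image_add_const_Ioo]
  calc _ ≤ _ := measure_mono iUnion_symmDiff_iUnion_subset
    _ ≤ _ := measure_iUnion_le _
    _ ≤ ∑' n, 2 * ENNReal.ofReal (min x (ℓ n)) :=
        ENNReal.tsum_le_tsum fun n => volume_symmDiff_Ioo_add_le (c n) (ℓ n) hx
    _ = _ := ENNReal.tsum_mul_left

lemma le_volume_symmDiff_image_add_iUnion_Ioo (hℓ : ∀ n, 0 ≤ ℓ n)
    (hc : ∀ n, c (n + 1) = c n + 2 * ℓ n) {x : ℝ} {N : ℕ} (hN : ∀ n < N, x ≤ ℓ n) :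
    ENNReal.ofReal (N * x) ≤ volume (symmDiff ((fun u => u + x) '' ⋃ n, Ioo (c n) (c n + ℓ n))
        (⋃ n, Ioo (c n) (c n + ℓ n))) := by
  have hmono : Monotone c := monotone_nat_of_le_succ fun n => by linarith [hc n, hℓ n]
  have hsep : ∀ m n, m < n → c m + 2 * ℓ m ≤ c n := fun m n h => hc m ▸ hmono h
  -- the part of the gap after the `n`-th interval covered by the translate of that interval
  set J : ℕ → Set ℝ := fun n => Ioo (c n + ℓ n) (c n + ℓ n + x)
  have hJ : ∀ n < N, J n ⊆ symmDiff ((fun u => u + x) '' ⋃ n, Ioo (c n) (c n + ℓ n))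
      (⋃ n, Ioo (c n) (c n + ℓ n)) := by
    intro n hn t ⟨ht1, ht2⟩
    have hxn := hN n hn
    refine Or.inl ⟨⟨t - x, mem_iUnion.2 ⟨n, by linarith, by linarith⟩, by ring⟩, ?_⟩
    simp only [mem_iUnion, mem_Ioo, not_exists, not_and, not_lt]
    intro m hm
    rcases lt_trichotomy m n with h | rfl | h
    · linarith [hsep m n h, hℓ m]
    · linarith
    · linarith [hsep n m h]
  have hdisj : (Finset.range N : Set ℕ).PairwiseDisjoint J := by
    have key : ∀ m n, m < N → m < n → Disjoint (J m) (J n) := fun m n hm h =>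
      Set.disjoint_left.2 fun t ⟨_, h2⟩ ⟨h3, _⟩ => by linarith [hsep m n h, hℓ n, hN m hm]
    intro m hm n hn hmn
    rcases hmn.lt_or_gt with h | h
    · exact key m n (Finset.mem_range.1 hm) h
    · exact (key n m (Finset.mem_range.1 hn) h).symm
  calc ENNReal.ofReal (N * x) = ∑ n ∈ Finset.range N, volume (J n) := by
        simp [J, Real.volume_Ioo, ENNReal.ofReal_mul]
    _ = volume (⋃ n ∈ Finset.range N, J n) :=
        (measure_biUnion_finset hdisj fun n _ => measurableSet_Ioo).symm
    _ ≤ _ := measure_mono (iUnion₂_subset fun n hn => hJ n (Finset.mem_range.1 hn))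

end ShiftedIntervals

lemma tsum_indicator_Ioo_le_ofReal (s : ℕ → ℝ) {t y : ℝ}
    (h : ∀ n : ℕ, t < s n → (n : ℝ) + 1 ≤ y) :
    ∑' n, (Ioo 0 (s n)).indicator (1 : ℝ → ℝ≥0∞) t ≤ ENNReal.ofReal y := by
  have hvanish : ∀ n ∉ Finset.range ⌊y⌋₊, (Ioo 0 (s n)).indicator (1 : ℝ → ℝ≥0∞) t = 0 := by
    refine fun n hn => indicator_of_notMem (fun ht => hn ?_) _
    exact Finset.mem_range.2 (Nat.le_floor (by exact_mod_cast h n ht.2))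
  rw [tsum_eq_sum hvanish]
  calc _ ≤ ∑ _n ∈ Finset.range ⌊y⌋₊, (1 : ℝ≥0∞) :=
        Finset.sum_le_sum fun n _ => indicator_le_self _ _ t
    _ = ENNReal.ofReal ⌊y⌋₊ := by simp
    _ ≤ ENNReal.ofReal y := by
        rcases le_or_gt 0 y with hy | hy
        · exact ENNReal.ofReal_le_ofReal (Nat.floor_le hy)
        · simp [Nat.floor_of_nonpos hy.le]

lemma tsum_ofReal_min_le_setLIntegral (s : ℕ → ℝ) {F : ℝ → ℝ} {x : ℝ}
    (hF : ∀ t ∈ Ioo 0 x, ∀ n : ℕ, t < s n → (n : ℝ) + 1 ≤ F t) :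
    ∑' n, ENNReal.ofReal (min x (s n)) ≤ ∫⁻ t in Ioo 0 x, ENNReal.ofReal (F t) := by
  calc ∑' n, ENNReal.ofReal (min x (s n))
      = ∑' n, ∫⁻ t in Ioo 0 x, (Ioo 0 (s n)).indicator 1 t := by
        refine tsum_congr fun n => ?_
        rw [lintegral_indicator_one measurableSet_Ioo, Measure.restrict_apply measurableSet_Ioo,
          Ioo_inter_Ioo, Real.volume_Ioo]
        simp [min_comm]
    _ = ∫⁻ t in Ioo 0 x, ∑' n, (Ioo 0 (s n)).indicator 1 t :=
        (lintegral_tsum fun n => (measurable_const.indicator measurableSet_Ioo).aemeasurable).symm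
    _ ≤ _ := setLIntegral_mono' measurableSet_Ioo fun t ht =>
        tsum_indicator_Ioo_le_ofReal s (hF t ht)

lemma exists_le_pow_mul_of_tendsto_div {L : ℝ → ℝ} (hL : ∀ x, 0 < x → 0 < L x)
    (hslow : Tendsto (fun x => L (2⁻¹ * x) / L x) (𝓝[>] 0) (𝓝 1)) {ρ : ℝ} (hρ : 1 < ρ) :
    ∃ δ > 0, ∀ x, 0 < x → x < δ → ∀ k : ℕ, L (x / 2 ^ k) ≤ ρ ^ k * L x := by
  obtain ⟨δ, hδ, hδρ⟩ := (nhdsGT_basis (0 : ℝ)).eventually_iff.1 (hslow.eventually (gt_mem_nhds hρ))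
  refine ⟨δ, hδ, fun x hx hxδ k => ?_⟩
  induction k with
  | zero => simp
  | succ k ih =>
    have hy : x / 2 ^ k ∈ Ioo 0 δ :=
      ⟨by positivity, (div_le_self hx.le (one_le_pow₀ one_le_two)).trans_lt hxδ⟩
    have hstep := (div_lt_iff₀ (hL _ hy.1)).1 (hδρ hy)
    calc L (x / 2 ^ (k + 1)) = L (2⁻¹ * (x / 2 ^ k)) := by ring_nf
      _ ≤ ρ * L (x / 2 ^ k) := hstep.le
      _ ≤ ρ * (ρ ^ k * L x) := by gcongr
      _ = ρ ^ (k + 1) * L x := by ring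

lemma lintegral_Ioo_zero_le_of_dyadic_decay {f : ℝ → ℝ} (hf : AntitoneOn f (Ioi 0))
    {x q : ℝ} (hx : 0 < x) (hfx : 0 ≤ f x) (hq0 : 0 ≤ q) (hq1 : q < 1)
    (hdecay : ∀ k : ℕ, x / 2 ^ k * f (x / 2 ^ k) ≤ q ^ k * (x * f x)) :
    ∫⁻ t in Ioo 0 x, ENNReal.ofReal (f t) ≤ ENNReal.ofReal ((1 - q)⁻¹ * (x * f x)) := by
  have hcover : Ioo 0 x ⊆ ⋃ k : ℕ, Ioc (x / 2 ^ (k + 1)) (x / 2 ^ k) := by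
    rintro t ⟨ht0, htx⟩
    obtain ⟨k, hk1, hk2⟩ := exists_nat_pow_near ((one_le_div ht0).2 htx.le) one_lt_two
    exact mem_iUnion.2 ⟨k, (div_lt_iff₀' (by positivity)).2 ((div_lt_iff₀ ht0).1 hk2),
      (le_div_iff₀' (by positivity)).2 ((le_div_iff₀ ht0).1 hk1)⟩
  have hpiece : ∀ k : ℕ, ∫⁻ t in Ioc (x / 2 ^ (k + 1)) (x / 2 ^ k), ENNReal.ofReal (f t) ≤
      ENNReal.ofReal (q ^ k * (x * f x)) := by
    intro k
    set u := x / 2 ^ (k + 1)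
    have hu : 0 < u := by positivity
    have hu2 : x / 2 ^ k = u + u := by simp only [u, pow_succ]; ring
    calc ∫⁻ t in Ioc u (x / 2 ^ k), ENNReal.ofReal (f t)
        ≤ ∫⁻ _ in Ioc u (x / 2 ^ k), ENNReal.ofReal (f u) :=
          setLIntegral_mono' measurableSet_Ioc fun t ht => ENNReal.ofReal_le_ofReal <|
            hf hu (hu.trans ht.1) ht.1.le
      _ = ENNReal.ofReal (u * f u) := by
          rw [setLIntegral_const, Real.volume_Ioc, hu2, ENNReal.ofReal_mul hu.le, mul_comm]
          ring_nf
      _ ≤ ENNReal.ofReal (q ^ (k + 1) * (x * f x)) := ENNReal.ofReal_le_ofReal (hdecay (k + 1))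
      _ ≤ ENNReal.ofReal (q ^ k * (x * f x)) := by
          refine ENNReal.ofReal_le_ofReal (mul_le_mul_of_nonneg_right ?_ (by positivity))
          exact pow_le_pow_of_le_one hq0 hq1.le k.le_succ
  have hsum : HasSum (fun k : ℕ => q ^ k * (x * f x)) ((1 - q)⁻¹ * (x * f x)) :=
    (hasSum_geometric_of_lt_one hq0 hq1).mul_right _
  calc ∫⁻ t in Ioo 0 x, ENNReal.ofReal (f t)
      ≤ ∫⁻ t in ⋃ k : ℕ, Ioc (x / 2 ^ (k + 1)) (x / 2 ^ k), ENNReal.ofReal (f t) :=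
        lintegral_mono_set hcover
    _ ≤ ∑' k : ℕ, ∫⁻ t in Ioc (x / 2 ^ (k + 1)) (x / 2 ^ k), ENNReal.ofReal (f t) :=
        lintegral_iUnion_le _ _
    _ ≤ ∑' k : ℕ, ENNReal.ofReal (q ^ k * (x * f x)) := ENNReal.tsum_le_tsum hpiece
    _ = _ := by
        rw [← ENNReal.ofReal_tsum_of_nonneg (fun k => by positivity) hsum.summable, hsum.tsum_eq]

lemma mul_rpow_sub_one_mul {x : ℝ} (hx : 0 < x) (γ c : ℝ) :
    x * (x ^ (γ - 1) * c) = x ^ γ * c := by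
  rw [Real.rpow_sub_one hx.ne']
  field_simp

lemma exists_lintegral_Ioo_zero_le_mul_self {γ : ℝ} (hγ : 0 < γ) {L f : ℝ → ℝ}
    (hL : ∀ x, 0 < x → 0 < L x)
    (hslow : Tendsto (fun x => L (2⁻¹ * x) / L x) (𝓝[>] 0) (𝓝 1))
    (hfL : ∀ x, 0 < x → f x = x ^ (γ - 1) * L x) (hf : AntitoneOn f (Ioi 0)) :
    ∃ δ > 0, ∃ C > 0, ∀ x, 0 < x → x < δ →
      ∫⁻ t in Ioo 0 x, ENNReal.ofReal (f t) ≤ ENNReal.ofReal (C * (x * f x)) := by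
  have h2γ : 1 < (2 : ℝ) ^ γ := Real.one_lt_rpow one_lt_two hγ
  set ρ := (1 + (2 : ℝ) ^ γ) / 2
  have hρ1 : 1 < ρ := by simp only [ρ]; linarith
  have hρ2 : ρ < 2 ^ γ := by simp only [ρ]; linarith
  set q := ρ / 2 ^ γ
  have hq0 : 0 ≤ q := by positivity
  have hq1 : q < 1 := (div_lt_one (by positivity)).2 (by linarith)
  obtain ⟨δ, hδ, hLρ⟩ := exists_le_pow_mul_of_tendsto_div hL hslow hρ1
  refine ⟨δ, hδ, (1 - q)⁻¹, inv_pos.2 (by linarith), fun x hx hxδ => ?_⟩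
  have hxf : ∀ y, 0 < y → y * f y = y ^ γ * L y := fun y hy => by
    rw [hfL y hy, mul_rpow_sub_one_mul hy]
  refine lintegral_Ioo_zero_le_of_dyadic_decay hf hx (hfL x hx ▸ by positivity [hL x hx])
    hq0 hq1 fun k => ?_
  have hxk : 0 < x / 2 ^ k := by positivity
  have hpow : (x / 2 ^ k) ^ γ * (2 ^ γ) ^ k = x ^ γ := by
    rw [Real.div_rpow hx.le (by positivity), ← Real.rpow_natCast_mul zero_le_two,
      ← Real.rpow_mul_natCast zero_le_two, mul_comm (k : ℝ)]
    field_simp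
  rw [hxf _ hxk, hxf x hx, div_pow, ← hpow]
  calc (x / 2 ^ k) ^ γ * L (x / 2 ^ k) ≤ (x / 2 ^ k) ^ γ * (ρ ^ k * L x) := by
        gcongr
        exact hLρ x hx hxδ k
    _ = _ := by field_simp

lemma partialSums_of_repeated_terms {a b ℓ : ℕ → ℝ}
    (ha : ∀ n, a (2 * n + 1) = ℓ n ∧ a (2 * n + 2) = ℓ n)
    (hb : ∀ n, b n = ∑ k ∈ Finset.range (n + 1), a k) (n : ℕ) :
    b (2 * n + 1) = b (2 * n) + ℓ n ∧ b (2 * (n + 1)) = b (2 * n) + 2 * ℓ n := by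
  have hsucc : ∀ m, b (m + 1) = b m + a (m + 1) := fun m => by
    rw [hb, hb, Finset.sum_range_succ]
  have h1 : b (2 * n + 1) = b (2 * n) + ℓ n := by rw [hsucc, (ha n).1]
  refine ⟨h1, ?_⟩
  rw [show 2 * (n + 1) = 2 * n + 1 + 1 by ring, hsucc, h1, (ha n).2]
  ring

theorem stmt_6_general (γ : ℝ) (hγ0 : 0 < γ)
    (L : ℝ → ℝ) (hLpos : ∀ x : ℝ, 0 < x → 0 < L x)
    (hslow : ∀ c : ℝ, 0 < c →
      Tendsto (fun x => L (c * x) / L x) (𝓝[>] (0 : ℝ)) (𝓝 1))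
    (f g : ℝ → ℝ)
    (hfdef : ∀ x : ℝ, 0 < x → f x = x ^ (γ - 1) * L x)
    (hfanti : StrictAntiOn f (Set.Ioi 0))
    (hginv : ∀ y : ℝ, 0 < y → 0 < g y ∧ f (g y) = y)
    (a : ℕ → ℝ)
    (ha : ∀ n : ℕ, 1 ≤ n → a (2 * n - 1) = g n ∧ a (2 * n) = g n)
    (b : ℕ → ℝ) (hb : ∀ n : ℕ, b n = ∑ k ∈ Finset.range (n + 1), a k)
    (U : Set ℝ) (hU : U = ⋃ n : ℕ, Set.Ioo (b (2 * n)) (b (2 * n + 1))) :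
    ∃ a₀ > (0 : ℝ), ∃ b₀ > (0 : ℝ), ∃ c₀ > (0 : ℝ), ∀ x : ℝ, 0 < x → x < a₀ →
      ENNReal.ofReal (b₀ * (x ^ γ * L x)) ≤ volume (symmDiff ((fun u => u + x) '' U) U) ∧
      volume (symmDiff ((fun u => u + x) '' U) U) ≤ ENNReal.ofReal (c₀ * (x ^ γ * L x)) := by
  have hlt_g : ∀ t y, 0 < t → 0 < y → (t < g y ↔ y < f t) := fun t y ht hy => by
    rw [← hfanti.lt_iff_gt (hginv y hy).1 ht, (hginv y hy).2]
  have hle_g : ∀ t y, 0 < t → 0 < y → (t ≤ g y ↔ y ≤ f t) := fun t y ht hy => by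
    rw [← hfanti.le_iff_ge (hginv y hy).1 ht, (hginv y hy).2]
  set ℓ : ℕ → ℝ := fun n => g (n + 1)
  have hℓ : ∀ n, 0 < ℓ n := fun n => (hginv _ (by positivity)).1
  have hsums := partialSums_of_repeated_terms (ℓ := ℓ) (fun n => by
    simpa [ℓ, show 2 * (n + 1) - 1 = 2 * n + 1 by omega, show 2 * (n + 1) = 2 * n + 2 by ring]
      using ha (n + 1) (by omega)) hb
  have hUℓ : U = ⋃ n, Ioo (b (2 * n)) (b (2 * n) + ℓ n) := by
    simp only [hU, (hsums _).1]
  obtain ⟨δ, hδ, C, hC, hkar⟩ := exists_lintegral_Ioo_zero_le_mul_self hγ0 hLpos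
    (hslow 2⁻¹ (by norm_num)) hfdef hfanti.antitoneOn
  refine ⟨min (g 2) δ, lt_min (hginv 2 two_pos).1 hδ, 1 / 2, by norm_num, 2 * C, by positivity,
    fun x hx hxa => ?_⟩
  rw [← mul_rpow_sub_one_mul hx, ← hfdef x hx, hUℓ]
  have hfx : 2 < f x := (hlt_g x 2 hx two_pos).1 (hxa.trans_le (min_le_left _ _))
  constructor
  · set N := ⌊f x⌋₊
    have hN : ∀ n < N, x ≤ ℓ n := fun n hn => by
      refine (hle_g x _ hx (by positivity)).2 ?_
      exact_mod_cast (Nat.le_floor_iff (by linarith)).1 (Nat.succ_le_of_lt hn)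
    calc ENNReal.ofReal (1 / 2 * (x * f x)) ≤ ENNReal.ofReal (N * x) :=
          ENNReal.ofReal_le_ofReal (by nlinarith [Nat.lt_floor_add_one (f x)])
      _ ≤ _ := le_volume_symmDiff_image_add_iUnion_Ioo _ _ (fun n => (hℓ n).le)
          (fun n => (hsums n).2) hN
  · calc _ ≤ 2 * ∑' n, ENNReal.ofReal (min x (ℓ n)) :=
          volume_symmDiff_image_add_iUnion_Ioo_le _ _ hx.le
      _ ≤ 2 * ∫⁻ t in Ioo 0 x, ENNReal.ofReal (f t) := by
          gcongr
          refine tsum_ofReal_min_le_setLIntegral ℓ fun t ht n htn => ?_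
          exact_mod_cast ((hlt_g t _ ht.1 (by positivity)).1 htn).le
      _ ≤ 2 * ENNReal.ofReal (C * (x * f x)) := by
          gcongr
          exact hkar x hx (hxa.trans_le (min_le_right _ _))
      _ = _ := by
          rw [← ENNReal.ofReal_ofNat 2, ← ENNReal.ofReal_mul zero_le_two, mul_assoc]

/-- Corollary: if `f(x) = x^{γ-1} L(x)` with `0 < γ ≤ 1` and `L` slowly varying at `0`
satisfies the assumptions of the construction (continuous, strictly decreasing, `→ ∞` at `0`,
`→ 0` at `∞`, integrable near `0`), and `U` is the bounded open set built from `f`, then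
`|(U+x) △ U| ≍ x^γ L(x)` as `x → 0⁺`. -/
theorem stmt_6 (γ : ℝ) (hγ0 : 0 < γ) (hγ1 : γ ≤ 1)
    (L : ℝ → ℝ) (hLpos : ∀ x : ℝ, 0 < x → 0 < L x) (hLmeas : Measurable L)
    (hslow : ∀ c : ℝ, 0 < c →
      Tendsto (fun x => L (c * x) / L x) (𝓝[>] (0 : ℝ)) (𝓝 1))
    (f g : ℝ → ℝ)
    (hfdef : ∀ x : ℝ, 0 < x → f x = x ^ (γ - 1) * L x)
    (hfpos : ∀ x : ℝ, 0 < x → 0 < f x)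
    (hfcont : ContinuousOn f (Set.Ioi 0))
    (hfanti : StrictAntiOn f (Set.Ioi 0))
    (hf0 : Tendsto f (𝓝[>] (0 : ℝ)) atTop)
    (hfinf : Tendsto f atTop (𝓝 0))
    (hfint : IntegrableOn f (Set.Ioo 0 1) volume)
    (hginv : ∀ y : ℝ, 0 < y → 0 < g y ∧ f (g y) = y)
    (a : ℕ → ℝ) (ha0 : a 0 = 0)
    (ha : ∀ n : ℕ, 1 ≤ n → a (2 * n - 1) = g n ∧ a (2 * n) = g n)
    (b : ℕ → ℝ) (hb : ∀ n : ℕ, b n = ∑ k ∈ Finset.range (n + 1), a k)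
    (U : Set ℝ) (hU : U = ⋃ n : ℕ, Set.Ioo (b (2 * n)) (b (2 * n + 1))) :
    ∃ a₀ > (0 : ℝ), ∃ b₀ > (0 : ℝ), ∃ c₀ > (0 : ℝ), ∀ x : ℝ, 0 < x → x < a₀ →
      ENNReal.ofReal (b₀ * (x ^ γ * L x)) ≤ volume (symmDiff ((fun u => u + x) '' U) U) ∧
      volume (symmDiff ((fun u => u + x) '' U) U) ≤ ENNReal.ofReal (c₀ * (x ^ γ * L x)) :=
  stmt_6_general γ hγ0 L hLpos hslow f g hfdef hfanti hginv a ha b hb U hU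
end

section
/- Let G be a second countable locally compact abelian group and let w be a continuous unitary representation of G on a complex Hilbert space K that does not contain the trivial representation (i.e. there is no nonzero vector fixed by all w(g)). Let c : G → K be a continuous 1-cocycle, i.e. c(r + s) = c(r) + w(r)c(s) for all r, s ∈ G. Then for all r, s ∈ G one has ⟨c(r), w(r)c(s)⟩ = ⟨c(s), w(s)c(r)⟩. -/
/-!
Fix `s` and put `D a = ⟪c a, w a (c s)⟫ - ⟪c s, w s (c a)⟫`; we show `D r = 0`. Since
`w (-a) (c a) = -c (-a)`, `D a = ⟪c (-s), c a⟫ - ⟪c (-a), c s⟫`, and in this form the cocycle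
identity makes `D` additive, because `w a (c b) - c b` is symmetric in `a, b` when `G` is abelian.
As `‖D a‖ ≤ 2 ‖c s‖ ‖c a‖`, it remains to see that `c (n • r) / n → 0`. Now `c (n • r)` is the
`n`-th Birkhoff sum of `c r` under `w r`, so by von Neumann's mean ergodic theorem `c (n • r) / n`
tends to the projection `P (c r)` of `c r` onto the vectors fixed by `w r`. The projection `P`
commutes with every `w t`, so applying it to `w r (c t) - c t = w t (c r) - c r` shows that
`P (c r)` is fixed by all `w t`, hence is `0`.
-/

open Filter Topology

theorem AddMonoidHom.eq_zero_of_norm_le_of_tendsto {𝕜 G E : Type*} [RCLike 𝕜] [AddMonoid G]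
    [NormedAddCommGroup E] [NormedSpace 𝕜 E] (φ : G →+ 𝕜) (c : G → E) (C : ℝ)
    (hφ : ∀ a, ‖φ a‖ ≤ C * ‖c a‖) (r : G)
    (hr : Tendsto (fun n : ℕ => (n : 𝕜)⁻¹ • c (n • r)) atTop (𝓝 0)) : φ r = 0 := by
  have hbound : ∀ n : ℕ, 1 ≤ n → ‖φ r‖ ≤ C * ‖(n : 𝕜)⁻¹ • c (n • r)‖ := by
    intro n hn
    have hn0 : (n : 𝕜) ≠ 0 := Nat.cast_ne_zero.mpr (by omega)
    calc ‖φ r‖ = ‖(n : 𝕜)⁻¹‖ * ‖φ (n • r)‖ := by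
          rw [← norm_mul, map_nsmul, nsmul_eq_mul, inv_mul_cancel_left₀ hn0]
      _ ≤ ‖(n : 𝕜)⁻¹‖ * (C * ‖c (n • r)‖) := by gcongr; exact hφ _
      _ = C * ‖(n : 𝕜)⁻¹ • c (n • r)‖ := by rw [norm_smul]; ring
  have hlim : Tendsto (fun n : ℕ => C * ‖(n : 𝕜)⁻¹ • c (n • r)‖) atTop (𝓝 0) := by
    simpa using hr.norm.const_mul C
  exact norm_le_zero_iff.mp (ge_of_tendsto hlim (eventually_atTop.mpr ⟨1, hbound⟩))

namespace LinearIsometryEquiv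

variable {𝕜 K : Type*} [RCLike 𝕜] [NormedAddCommGroup K] [InnerProductSpace 𝕜 K]

def fixedSubspace (U : K ≃ₗᵢ[𝕜] K) : Submodule 𝕜 K :=
  ((U : K →L[𝕜] K) : K →ₗ[𝕜] K).eqLocus ((1 : K →L[𝕜] K) : K →ₗ[𝕜] K)

theorem mem_fixedSubspace {U : K ≃ₗᵢ[𝕜] K} {x : K} : x ∈ U.fixedSubspace ↔ U x = x := Iff.rfl

variable [CompleteSpace K]

instance (U : K ≃ₗᵢ[𝕜] K) : U.fixedSubspace.HasOrthogonalProjection := by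
  unfold fixedSubspace; infer_instance

theorem tendsto_birkhoffAverage_starProjection_fixedSubspace (U : K ≃ₗᵢ[𝕜] K) (x : K) :
    Tendsto (birkhoffAverage 𝕜 U id · x) atTop (𝓝 (U.fixedSubspace.starProjection x)) :=
  (U : K →L[𝕜] K).tendsto_birkhoffAverage_orthogonalProjection
    U.toLinearIsometry.norm_toContinuousLinearMap_le x

theorem starProjection_fixedSubspace_map_of_commute (U V : K ≃ₗᵢ[𝕜] K)
    (hUV : ∀ x, U (V x) = V (U x)) (x : K) :
    U.fixedSubspace.starProjection (V x) = V (U.fixedSubspace.starProjection x) := by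
  have hsymm : ∀ y ∈ U.fixedSubspace, V.symm y ∈ U.fixedSubspace := by
    intro y hy
    rw [mem_fixedSubspace] at hy ⊢
    apply V.injective
    rw [← hUV, apply_symm_apply, hy]
  refine Submodule.eq_starProjection_of_mem_of_inner_eq_zero ?_ fun y hy => ?_
  · rw [mem_fixedSubspace, hUV, mem_fixedSubspace.mp (Submodule.starProjection_apply_mem _ x)]
  · rw [← _root_.map_sub, inner_map_eq_flip]
    exact Submodule.starProjection_inner_eq_zero x _ (hsymm y hy)

end LinearIsometryEquiv

section Cocycle

variable {𝕜 G K : Type*} [RCLike 𝕜] [NormedAddCommGroup K] [InnerProductSpace 𝕜 K]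

local notation "⟪" x ", " y "⟫" => inner 𝕜 x y

def cocycleSkew (w : G → K ≃ₗᵢ[𝕜] K) (c : G → K) (s a : G) : 𝕜 :=
  ⟪c a, w a (c s)⟫ - ⟪c s, w s (c a)⟫

variable {w : G → K ≃ₗᵢ[𝕜] K} {c : G → K}

theorem norm_cocycleSkew_le (s a : G) :
    ‖cocycleSkew w c s a‖ ≤ 2 * ‖c s‖ * ‖c a‖ := by
  calc ‖cocycleSkew w c s a‖ ≤ ‖⟪c a, w a (c s)⟫‖ + ‖⟪c s, w s (c a)⟫‖ := norm_sub_le _ _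
    _ ≤ ‖c a‖ * ‖w a (c s)‖ + ‖c s‖ * ‖w s (c a)‖ := by
        gcongr <;> exact norm_inner_le_norm _ _
    _ = 2 * ‖c s‖ * ‖c a‖ := by simp only [norm_map]; ring

variable [AddCommGroup G]

theorem inner_map_eq_inner_map_neg (hw0 : ∀ ξ, w 0 ξ = ξ)
    (hwadd : ∀ r s ξ, w (r + s) ξ = w r (w s ξ)) (t : G) (x y : K) :
    ⟪x, w t y⟫ = ⟪w (-t) x, y⟫ := by
  rw [← (w t).inner_map_map (w (-t) x), ← hwadd, add_neg_cancel, hw0]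

theorem map_nsmul_apply (hw0 : ∀ ξ, w 0 ξ = ξ) (hwadd : ∀ r s ξ, w (r + s) ξ = w r (w s ξ))
    (r : G) (n : ℕ) (x : K) : w (n • r) x = (w r)^[n] x := by
  induction n with
  | zero => rw [zero_nsmul, hw0, Function.iterate_zero_apply]
  | succ n ih => rw [succ_nsmul', hwadd, ih, Function.iterate_succ_apply']

theorem map_cocycle_sub_comm (hcoc : ∀ r s, c (r + s) = c r + w r (c s)) (a b : G) :
    w a (c b) - c b = w b (c a) - c a := by
  have h : c a + w a (c b) = c b + w b (c a) := by rw [← hcoc, ← hcoc, add_comm]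
  rw [sub_eq_sub_iff_add_eq_add, add_comm, h, add_comm]

theorem cocycle_zero (hw0 : ∀ ξ, w 0 ξ = ξ) (hcoc : ∀ r s, c (r + s) = c r + w r (c s)) :
    c 0 = 0 := by
  simpa [hw0] using hcoc 0 0

theorem map_neg_cocycle (hw0 : ∀ ξ, w 0 ξ = ξ) (hcoc : ∀ r s, c (r + s) = c r + w r (c s))
    (t : G) : w (-t) (c t) = -c (-t) := by
  rw [eq_neg_iff_add_eq_zero, add_comm, ← hcoc, neg_add_cancel, cocycle_zero hw0 hcoc]

theorem inner_cocycle_map (hw0 : ∀ ξ, w 0 ξ = ξ) (hwadd : ∀ r s ξ, w (r + s) ξ = w r (w s ξ))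
    (hcoc : ∀ r s, c (r + s) = c r + w r (c s)) (a : G) (x : K) :
    ⟪c a, w a x⟫ = -⟪c (-a), x⟫ := by
  rw [inner_map_eq_inner_map_neg hw0 hwadd, map_neg_cocycle hw0 hcoc, inner_neg_left]

theorem inner_cocycle_neg_map_sub (hw0 : ∀ ξ, w 0 ξ = ξ)
    (hwadd : ∀ r s ξ, w (r + s) ξ = w r (w s ξ)) (hcoc : ∀ r s, c (r + s) = c r + w r (c s))
    (a b s : G) : ⟪c (-s), w a (c b) - c b⟫ = ⟪c (-b), w a (c s) - c s⟫ := by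
  have hmove : ∀ t x y, ⟪x, w t y - y⟫ = ⟪w (-t) x - x, y⟫ := fun t x y => by
    rw [inner_sub_right, inner_sub_left, inner_map_eq_inner_map_neg hw0 hwadd]
  rw [map_cocycle_sub_comm hcoc a b, hmove, map_cocycle_sub_comm hcoc (-b) (-s), ← hmove,
    map_cocycle_sub_comm hcoc s a]

theorem cocycleSkew_eq (hw0 : ∀ ξ, w 0 ξ = ξ) (hwadd : ∀ r s ξ, w (r + s) ξ = w r (w s ξ))
    (hcoc : ∀ r s, c (r + s) = c r + w r (c s)) (s a : G) :
    cocycleSkew w c s a = ⟪c (-s), c a⟫ - ⟪c (-a), c s⟫ := by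
  rw [cocycleSkew, inner_cocycle_map hw0 hwadd hcoc, inner_cocycle_map hw0 hwadd hcoc]
  ring

theorem cocycleSkew_add (hw0 : ∀ ξ, w 0 ξ = ξ) (hwadd : ∀ r s ξ, w (r + s) ξ = w r (w s ξ))
    (hcoc : ∀ r s, c (r + s) = c r + w r (c s)) (s a b : G) :
    cocycleSkew w c s (a + b) = cocycleSkew w c s a + cocycleSkew w c s b := by
  have hneg : c (-(a + b)) = c (-a) + w (-a) (c (-b)) := by rw [neg_add, hcoc]
  have key := inner_cocycle_neg_map_sub hw0 hwadd hcoc a b s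
  rw [inner_sub_right, inner_sub_right] at key
  simp only [cocycleSkew_eq hw0 hwadd hcoc, hcoc a b, hneg, inner_add_left, inner_add_right,
    ← inner_map_eq_inner_map_neg hw0 hwadd]
  linear_combination key

theorem cocycle_nsmul (hw0 : ∀ ξ, w 0 ξ = ξ) (hwadd : ∀ r s ξ, w (r + s) ξ = w r (w s ξ))
    (hcoc : ∀ r s, c (r + s) = c r + w r (c s)) (r : G) (n : ℕ) :
    c (n • r) = birkhoffSum (w r) id n (c r) := by
  induction n with
  | zero => rw [zero_nsmul, cocycle_zero hw0 hcoc, birkhoffSum_zero]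
  | succ n ih =>
    rw [succ_nsmul, hcoc, ih, birkhoffSum_succ, map_nsmul_apply hw0 hwadd, id]

variable [CompleteSpace K]

theorem starProjection_fixedSubspace_cocycle_eq_zero (hwadd : ∀ r s ξ, w (r + s) ξ = w r (w s ξ))
    (hnotriv : ∀ ξ, (∀ x, w x ξ = ξ) → ξ = 0) (hcoc : ∀ r s, c (r + s) = c r + w r (c s))
    (r : G) : (w r).fixedSubspace.starProjection (c r) = 0 := by
  set P := (w r).fixedSubspace.starProjection
  have hcomm : ∀ t x, P (w t x) = w t (P x) := fun t =>
    LinearIsometryEquiv.starProjection_fixedSubspace_map_of_commute (w r) (w t)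
      fun x => by rw [← hwadd, add_comm, hwadd]
  have hfix : ∀ x, w r (P x) = P x := fun x =>
    LinearIsometryEquiv.mem_fixedSubspace.mp (Submodule.starProjection_apply_mem _ x)
  apply hnotriv
  intro t
  have h := congrArg P (map_cocycle_sub_comm hcoc r t)
  rw [map_sub, map_sub, hcomm, hcomm, hfix, sub_self] at h
  exact sub_eq_zero.mp h.symm

theorem tendsto_inv_smul_cocycle_nsmul (hw0 : ∀ ξ, w 0 ξ = ξ)
    (hwadd : ∀ r s ξ, w (r + s) ξ = w r (w s ξ)) (hnotriv : ∀ ξ, (∀ x, w x ξ = ξ) → ξ = 0)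
    (hcoc : ∀ r s, c (r + s) = c r + w r (c s)) (r : G) :
    Tendsto (fun n : ℕ => (n : 𝕜)⁻¹ • c (n • r)) atTop (𝓝 0) := by
  have h := (w r).tendsto_birkhoffAverage_starProjection_fixedSubspace (c r)
  rw [starProjection_fixedSubspace_cocycle_eq_zero hwadd hnotriv hcoc] at h
  refine h.congr fun n => ?_
  rw [birkhoffAverage, cocycle_nsmul hw0 hwadd hcoc]

end Cocycle

theorem stmt_7_general {G : Type*} [AddCommGroup G]
    {K : Type*} [NormedAddCommGroup K] [InnerProductSpace ℂ K] [CompleteSpace K]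
    (w : G → (K ≃ₗᵢ[ℂ] K))
    (hw0 : ∀ ξ : K, w 0 ξ = ξ)
    (hwadd : ∀ r s : G, ∀ ξ : K, w (r + s) ξ = w r (w s ξ))
    (hnotriv : ∀ ξ : K, (∀ x : G, w x ξ = ξ) → ξ = 0)
    (c : G → K)
    (hcoc : ∀ r s : G, c (r + s) = c r + w r (c s)) :
    ∀ r s : G, (inner ℂ (c r) (w r (c s)) : ℂ) = (inner ℂ (c s) (w s (c r)) : ℂ) := by
  intro r s
  let skew : G →+ ℂ := AddMonoidHom.mk' (cocycleSkew w c s) (cocycleSkew_add hw0 hwadd hcoc s)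
  have h : skew r = 0 :=
    skew.eq_zero_of_norm_le_of_tendsto c _ (norm_cocycleSkew_le s) r
      (tendsto_inv_smul_cocycle_nsmul hw0 hwadd hnotriv hcoc r)
  exact sub_eq_zero.mp h

/-- Let `G` be a second countable locally compact abelian (additive) topological group, `w` a
strongly continuous unitary representation of `G` on a complex Hilbert space `K` containing no
nonzero invariant vector, and `c : G → K` a continuous 1-cocycle
(`c(r+s) = c(r) + w(r)c(s)`). Then `⟨c(r), w(r)c(s)⟩ = ⟨c(s), w(s)c(r)⟩` for all `r, s`. -/
theorem stmt_7 {G : Type*} [AddCommGroup G] [TopologicalSpace G]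
    [IsTopologicalAddGroup G] [LocallyCompactSpace G] [SecondCountableTopology G]
    {K : Type*} [NormedAddCommGroup K] [InnerProductSpace ℂ K] [CompleteSpace K]
    (w : G → (K ≃ₗᵢ[ℂ] K))
    (hw0 : ∀ ξ : K, w 0 ξ = ξ)
    (hwadd : ∀ r s : G, ∀ ξ : K, w (r + s) ξ = w r (w s ξ))
    (hwcont : ∀ ξ : K, Continuous fun x : G => w x ξ)
    (hnotriv : ∀ ξ : K, (∀ x : G, w x ξ = ξ) → ξ = 0)
    (c : G → K) (hc : Continuous c)
    (hcoc : ∀ r s : G, c (r + s) = c r + w r (c s)) :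
    ∀ r s : G, (inner ℂ (c r) (w r (c s)) : ℂ) = (inner ℂ (c s) (w s (c r)) : ℂ) :=
  stmt_7_general w hw0 hwadd hnotriv c hcoc
end

section
/- Let H be a complex Hilbert space and let S, T be bounded linear operators on H satisfying T*S = 1. Then |S| |T|² |S| ≥ 1 in the sense of positive operators, where |A| = (A*A)^{1/2} denotes the absolute value of an operator A. -/
/-!
Since `T* S = 1`, for `x = |S| z` we get
`‖x‖² = ⟪z, |S| x⟫ = ⟪T* S z, |S| x⟫ = ⟪S z, T |S| x⟫ ≤ ‖S z‖ ‖T |S| x‖ = ‖x‖ ‖|T| |S| x‖`,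
so `‖x‖ ≤ ‖|T| |S| x‖` on the range of `|S|`. That range is dense, because `|S|` is self-adjoint
and injective (as `S` is), hence the inequality holds everywhere, which says exactly
`|S| |T|² |S| = (|T| |S|)* (|T| |S|) ≥ 1`.
-/

open ContinuousLinearMap
open scoped InnerProductSpace

namespace ContinuousLinearMap

variable {𝕜 E F G : Type*} [RCLike 𝕜]
  [NormedAddCommGroup E] [InnerProductSpace 𝕜 E] [CompleteSpace E]
  [NormedAddCommGroup F] [InnerProductSpace 𝕜 F] [CompleteSpace F]
  [NormedAddCommGroup G] [InnerProductSpace 𝕜 G]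

theorem norm_apply_eq_of_adjoint_comp_self_eq [CompleteSpace G] {A : E →L[𝕜] F} {B : E →L[𝕜] G}
    (h : adjoint A ∘L A = adjoint B ∘L B) (x : E) : ‖A x‖ = ‖B x‖ := by
  rw [apply_norm_eq_sqrt_inner_adjoint_left, h, ← apply_norm_eq_sqrt_inner_adjoint_left]

theorem _root_.IsSelfAdjoint.denseRange_of_injective {A : E →L[𝕜] E} (hA : IsSelfAdjoint A)
    (hinj : Function.Injective A) : DenseRange A := by
  have : (LinearMap.range (A : E →ₗ[𝕜] E)).topologicalClosure = ⊤ := by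
    rw [Submodule.topologicalClosure_eq_top_iff, hA.isSymmetric.orthogonal_range,
      LinearMap.ker_eq_bot_of_injective hinj]
  simpa [DenseRange, LinearMap.coe_range] using
    Submodule.dense_iff_topologicalClosure_eq_top.mpr this

theorem isPositive_adjoint_comp_self_sub_one_of_forall_norm_le {C : E →L[𝕜] F}
    (hC : ∀ x, ‖x‖ ≤ ‖C x‖) : (adjoint C ∘L C - 1).IsPositive := by
  refine isPositive_def'.mpr
    ⟨(isPositive_adjoint_comp_self C).isSelfAdjoint.sub (.one _), fun x => ?_⟩
  have : (adjoint C ∘L C - 1).reApplyInnerSelf x = ‖C x‖ ^ 2 - ‖x‖ ^ 2 := by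
    rw [reApplyInnerSelf, sub_apply, inner_sub_left, map_sub,
      ← apply_norm_sq_eq_inner_adjoint_left, one_apply_eq_self, inner_self_eq_norm_sq]
  rw [this, sub_nonneg]
  exact pow_le_pow_left₀ (norm_nonneg x) (hC x) 2

section LeftInverse

variable {S T : E →L[𝕜] F} {AS : E →L[𝕜] E} {AT : E →L[𝕜] G}

theorem norm_apply_le_of_adjoint_comp_eq_one (hTS : adjoint T ∘L S = 1)
    (hAS : IsSelfAdjoint AS) (hS : ∀ x, ‖AS x‖ = ‖S x‖) (hT : ∀ x, ‖AT x‖ = ‖T x‖) (z : E) :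
    ‖AS z‖ ≤ ‖AT (AS (AS z))‖ := by
  set x := AS z
  have hinner : ⟪S z, T (AS x)⟫_𝕜 = ⟪x, x⟫_𝕜 := by
    rw [← adjoint_inner_left, ← comp_apply, hTS, one_apply_eq_self]
    exact (hAS.isSymmetric z x).symm
  have hsq : ‖x‖ ^ 2 ≤ ‖x‖ * ‖AT (AS x)‖ := by
    calc ‖x‖ ^ 2 = RCLike.re ⟪S z, T (AS x)⟫_𝕜 := by rw [hinner, inner_self_eq_norm_sq]
      _ ≤ ‖S z‖ * ‖T (AS x)‖ := re_inner_le_norm _ _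
      _ = ‖x‖ * ‖AT (AS x)‖ := by rw [hS, hT]
  nlinarith [norm_nonneg x, norm_nonneg (AT (AS x))]

theorem norm_le_of_adjoint_comp_eq_one (hTS : adjoint T ∘L S = 1)
    (hAS : IsSelfAdjoint AS) (hS : ∀ x, ‖AS x‖ = ‖S x‖) (hT : ∀ x, ‖AT x‖ = ‖T x‖) (x : E) :
    ‖x‖ ≤ ‖AT (AS x)‖ := by
  have hinj : Function.Injective AS := by
    refine (injective_iff_map_eq_zero AS).mpr fun y hy => ?_
    have hSy : S y = 0 := norm_eq_zero.mp (by rw [← hS, hy, norm_zero])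
    calc y = adjoint T (S y) := by rw [← comp_apply, hTS, one_apply_eq_self]
      _ = 0 := by rw [hSy, map_zero]
  refine (hAS.denseRange_of_injective hinj).induction_on x
    (isClosed_le continuous_norm (by fun_prop)) fun z => ?_
  exact norm_apply_le_of_adjoint_comp_eq_one hTS hAS hS hT z

end LeftInverse

end ContinuousLinearMap

/-- Let `S, T` be bounded operators on a complex Hilbert space with `T* S = 1`, and let
`|S|` and `|T|` be the (positive) absolute values, i.e. the positive operators with
`|S|² = S*S` and `|T|² = T*T`. Then `|S| |T|² |S| ≥ 1` as positive operators. -/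
theorem stmt_10 {H : Type*} [NormedAddCommGroup H] [InnerProductSpace ℂ H] [CompleteSpace H]
    (S T AS AT : H →L[ℂ] H) (hTS : adjoint T ∘L S = 1)
    (hASpos : AS.IsPositive) (hATpos : AT.IsPositive)
    (hAS : AS ∘L AS = adjoint S ∘L S) (hAT : AT ∘L AT = adjoint T ∘L T) :
    (AS ∘L AT ∘L AT ∘L AS - 1).IsPositive := by
  have hASsa := hASpos.isSelfAdjoint
  have hATsa := hATpos.isSelfAdjoint
  have hS : ∀ x, ‖AS x‖ = ‖S x‖ :=
    norm_apply_eq_of_adjoint_comp_self_eq (by rwa [hASsa.adjoint_eq])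
  have hT : ∀ x, ‖AT x‖ = ‖T x‖ :=
    norm_apply_eq_of_adjoint_comp_self_eq (by rwa [hATsa.adjoint_eq])
  have hconj : AS ∘L AT ∘L AT ∘L AS = adjoint (AT ∘L AS) ∘L (AT ∘L AS) := by
    rw [adjoint_comp, hASsa.adjoint_eq, hATsa.adjoint_eq]
    rfl
  rw [hconj]
  exact isPositive_adjoint_comp_self_sub_one_of_forall_norm_le
    (norm_le_of_adjoint_comp_eq_one hTS hASsa hS hT)
end

section
/- Let {S_t}_{t≥0} be the right shift semigroup on L²(0,∞), defined by (S_t f)(x) = 0 for x < t and (S_t f)(x) = f(x − t) for x ≥ t. Suppose c : (0,∞) → L²(0,∞) is a measurable map satisfying the additive cocycle relation c(s + t) = c(s) + S_s c(t) for all s, t > 0. Then t ↦ c(t) is continuous in the norm of L²(0,∞). -/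
open MeasureTheory Filter Topology Set
open scoped ENNReal

/-!
Extension by zero embeds `L²(0,∞)` isometrically into `L²(ℝ)` and turns the right shift `S_s` into
the translation `T s`, an isometry with `T s f → f` as `s → 0`; so `U t = ext (c t)` satisfies
`U (s + t) = U s + T s (U t)`. By Pettis' argument `U` is strongly measurable, so `t ↦ ‖U t‖` is a
measurable subadditive function on `(0, ∞)`, hence bounded, by `M` say, on `[4, 6]`: for `t` there,
a sublevel set `E ⊆ (0, 4]` of measure `> 3` meets its reflection `t - E` inside `[0, 6]`. Integrating `U (t + x) = U t + T t (U x)`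
over `x ∈ [4, 5]` gives `U t = (∫_{4+t}^{5+t} U - ∫_4^5 U) + (v - T t v)` with `v = ∫_4^5 U`, so
`‖U t‖ ≤ 2 M t + ‖v - T t v‖ → 0` as `t → 0⁺`. Continuity on `(0, ∞)` then follows from
`‖U r - U s‖ ≤ ‖U (r - s)‖` for `0 < s < r`.
-/

section Pettis

variable {α : Type*} [MeasurableSpace α]

theorem measurable_of_measurable_dist {β : Type*} [PseudoMetricSpace β] [SecondCountableTopology β]
    [MeasurableSpace β] [BorelSpace β] {f : α → β}
    (hf : ∀ y, Measurable fun a => dist (f a) y) : Measurable f := by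
  refine measurable_of_isOpen fun s hs => ?_
  choose r hr hrs using fun y : s => Metric.isOpen_iff.1 hs y y.2
  obtain ⟨S, hS, hSs⟩ := TopologicalSpace.isOpen_iUnion_countable
    (fun y : s => Metric.ball (y : β) (r y)) fun _ => Metric.isOpen_ball
  have hs_eq : s = ⋃ y ∈ S, Metric.ball (y : β) (r y) := by
    rw [hSs]
    exact Subset.antisymm (fun y hy => mem_iUnion.2 ⟨⟨y, hy⟩, Metric.mem_ball_self (hr _)⟩)
      (iUnion_subset hrs)
  rw [hs_eq, preimage_iUnion₂]
  exact .biUnion hS fun y _ => hf y measurableSet_Iio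

variable {𝕜 F : Type*} [RCLike 𝕜] [NormedAddCommGroup F] [InnerProductSpace 𝕜 F]

theorem norm_sq_eq_iSup_two_mul_re_inner_sub_norm_sq (x : F) :
    ‖x‖ ^ 2 = ⨆ y : F, 2 * RCLike.re (inner 𝕜 x y) - ‖y‖ ^ 2 := by
  have h : ∀ y : F, 2 * RCLike.re (inner 𝕜 x y) - ‖y‖ ^ 2 = ‖x‖ ^ 2 - ‖x - y‖ ^ 2 := fun y => by
    rw [@norm_sub_sq 𝕜]; ring
  simp_rw [h]
  refine (ciSup_eq_of_forall_le_of_forall_lt_exists_gt (fun y => ?_) fun w hw => ⟨x, ?_⟩).symm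
  · linarith [sq_nonneg ‖x - y‖]
  · simpa using hw

theorem stronglyMeasurable_of_measurable_inner [SecondCountableTopology F] {f : α → F}
    (hf : ∀ y, Measurable fun a => inner 𝕜 (f a) y) : StronglyMeasurable f := by
  borelize F
  obtain ⟨D, hD, hDdense⟩ := TopologicalSpace.exists_countable_dense F
  have : Countable D := hD.to_subtype
  refine (measurable_of_measurable_dist fun z => ?_).stronglyMeasurable
  have hnorm : ∀ x : F, ‖x‖ = √(⨆ y : D, 2 * RCLike.re (inner 𝕜 x y) - ‖(y : F)‖ ^ 2) := by
    intro x
    rw [hDdense.ciSup' (f := fun y : F => 2 * RCLike.re (inner 𝕜 x y) - ‖y‖ ^ 2) (by fun_prop),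
      ← norm_sq_eq_iSup_two_mul_re_inner_sub_norm_sq, Real.sqrt_sq (norm_nonneg x)]
  simp only [dist_eq_norm, hnorm (_ - z), inner_sub_left]
  refine .sqrt (.iSup fun y => ?_)
  exact ((RCLike.measurable_re.comp ((hf y).sub measurable_const)).const_mul 2).sub_const _

end Pettis

theorem exists_forall_Icc_le_of_subadditive {ψ : ℝ → ℝ} (hψ : Measurable ψ)
    (hsub : ∀ s t, 0 < s → 0 < t → ψ (s + t) ≤ ψ s + ψ t) {b : ℝ} (hb : 0 < b) :
    ∃ M, ∀ t ∈ Icc (2 * b) (3 * b), ψ t ≤ M := by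
  set E : ℕ → Set ℝ := fun n => Ioc 0 (2 * b) ∩ ψ ⁻¹' Iic n
  have hE : ∀ n, MeasurableSet (E n) := fun n => measurableSet_Ioc.inter (hψ measurableSet_Iic)
  have hEmono : Monotone E := fun m n hmn =>
    inter_subset_inter_right _ (preimage_mono (Iic_subset_Iic.2 (Nat.cast_le.2 hmn)))
  have hEunion : ⋃ n, E n = Ioc 0 (2 * b) :=
    Subset.antisymm (iUnion_subset fun n => inter_subset_left)
      fun x hx => mem_iUnion.2 ((exists_nat_ge (ψ x)).imp fun _ hn => ⟨hx, hn⟩)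
  have hlim : Tendsto (fun n => volume (E n)) atTop (𝓝 (ENNReal.ofReal (2 * b))) := by
    simpa [hEunion, Function.comp_def] using tendsto_measure_iUnion_atTop (μ := volume) hEmono
  -- `E N` and `t - E N` both lie in `[0, 3b]`, so measure `> 3b/2` forces them to meet
  obtain ⟨N, hN⟩ := (hlim.eventually (lt_mem_nhds ((ENNReal.ofReal_lt_ofReal_iff (by positivity)).2
    (by linarith : 3 / 2 * b < 2 * b)))).exists
  refine ⟨2 * N, fun t ht => ?_⟩
  have hEu : E N ⊆ Icc 0 (3 * b) := fun x hx => ⟨hx.1.1.le, by linarith [hx.1.2]⟩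
  have hEu' : (t - ·) ⁻¹' E N ⊆ Icc 0 (3 * b) := fun x hx => by
    constructor <;> linarith [hx.1.1, hx.1.2, ht.1, ht.2]
  have hvol : volume (Icc (0 : ℝ) (3 * b)) < volume (E N) + volume ((t - ·) ⁻¹' E N) := by
    rw [(Measure.measurePreserving_sub_left volume t).measure_preimage (hE N).nullMeasurableSet,
      Real.volume_Icc, sub_zero]
    calc ENNReal.ofReal (3 * b) = ENNReal.ofReal (3 / 2 * b) + ENNReal.ofReal (3 / 2 * b) := by
          rw [← ENNReal.ofReal_add (by positivity) (by positivity)]; ring_nf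
      _ < volume (E N) + volume (E N) := ENNReal.add_lt_add hN hN
  obtain ⟨s, hs, hts⟩ := nonempty_inter_of_measure_lt_add volume
    ((hE N).preimage (measurable_const.sub measurable_id)) hEu hEu' hvol
  have hψs : ψ s ≤ N := hs.2
  have hψts : ψ (t - s) ≤ N := hts.2
  calc ψ t = ψ (s + (t - s)) := by rw [add_sub_cancel]
    _ ≤ ψ s + ψ (t - s) := hsub _ _ hs.1.1 hts.1.1
    _ ≤ 2 * N := by linarith

section Cocycle

variable {E : Type*} [NormedAddCommGroup E] [NormedSpace ℝ E]

theorem norm_intervalIntegral_add_sub_le {f : ℝ → E} {a b t M : ℝ} (hab : a ≤ b) (ht : 0 ≤ t)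
    (hf : IntervalIntegrable f volume a (b + t)) (hM : ∀ x ∈ Icc a (b + t), ‖f x‖ ≤ M) :
    ‖(∫ x in a + t..b + t, f x) - ∫ x in a..b, f x‖ ≤ 2 * M * t := by
  have hf' : ∀ {c d}, c ∈ Icc a (b + t) → d ∈ Icc a (b + t) → IntervalIntegrable f volume c d :=
    fun hc hd => hf.mono_set (uIcc_subset_uIcc (Icc_subset_uIcc hc) (Icc_subset_uIcc hd))
  have hbound : ∀ c ∈ Icc a b, ‖∫ x in c..c + t, f x‖ ≤ M * t := fun c hc => by
    have hsub : uIoc c (c + t) ⊆ Icc a (b + t) := by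
      rw [uIoc_of_le (by linarith)]
      exact Ioc_subset_Icc_self.trans (Icc_subset_Icc hc.1 (by linarith [hc.2]))
    simpa [abs_of_nonneg ht] using
      intervalIntegral.norm_integral_le_of_norm_le_const fun x hx => hM x (hsub hx)
  rw [intervalIntegral.integral_interval_sub_interval_comm'
    (hf' ⟨by linarith, by linarith⟩ ⟨by linarith, le_rfl⟩)
    (hf' ⟨le_rfl, by linarith⟩ ⟨hab, by linarith⟩)
    (hf' ⟨by linarith, by linarith⟩ ⟨le_rfl, by linarith⟩)]
  linarith [norm_sub_le (∫ x in b..b + t, f x) (∫ x in a..a + t, f x), hbound b ⟨hab, le_rfl⟩,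
    hbound a ⟨le_rfl, hab⟩]

variable {T : ℝ → E →L[ℝ] E} {U : ℝ → E}

theorem norm_sub_le_of_cocycle (hT : ∀ t x, ‖T t x‖ ≤ ‖x‖)
    (hU : ∀ s t, 0 < s → 0 < t → U (s + t) = U s + T s (U t)) {s r : ℝ} (hs : 0 < s) (hsr : s < r) :
    ‖U r - U s‖ ≤ ‖U (r - s)‖ := by
  have h := hU s (r - s) hs (sub_pos.2 hsr)
  rw [add_sub_cancel] at h
  rw [h, add_sub_cancel_left]
  exact hT _ _

theorem norm_le_of_cocycle [CompleteSpace E]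
    (hU : ∀ s t, 0 < s → 0 < t → U (s + t) = U s + T s (U t)) (hUm : StronglyMeasurable U)
    {a M : ℝ} (ha : 0 < a) (hM : ∀ x ∈ Icc a (a + 2), ‖U x‖ ≤ M) {t : ℝ} (ht : 0 < t)
    (ht1 : t ≤ 1) :
    ‖U t‖ ≤ 2 * M * t + ‖(∫ x in a..a + 1, U x) - T t (∫ x in a..a + 1, U x)‖ := by
  have hUi : ∀ {b}, a ≤ b → b ≤ a + 2 → IntervalIntegrable U volume a b := fun hab hb =>
    (intervalIntegrable_const (c := M)).mono_fun' hUm.aestronglyMeasurable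
      ((ae_restrict_iff' measurableSet_uIoc).2 (.of_forall fun x hx => by
        rw [uIoc_of_le hab] at hx
        exact hM x ⟨hx.1.le, hx.2.trans hb⟩))
  have hUi1 : IntervalIntegrable U volume a (a + 1) := hUi (by linarith) (by linarith)
  have hTU : IntervalIntegrable (fun x => T t (U x)) volume a (a + 1) :=
    ⟨(T t).integrable_comp hUi1.1, (T t).integrable_comp hUi1.2⟩
  have hshift : (∫ x in a + t..a + 1 + t, U x) = U t + T t (∫ x in a..a + 1, U x) := by
    rw [← intervalIntegral.integral_comp_add_right, ← (T t).intervalIntegral_comp_comm hUi1]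
    calc ∫ x in a..a + 1, U (x + t) = ∫ x in a..a + 1, (U t + T t (U x)) :=
          intervalIntegral.integral_congr fun x hx => by
            rw [uIcc_of_le (by linarith)] at hx
            rw [add_comm, hU t x ht (by linarith [hx.1])]
      _ = U t + ∫ x in a..a + 1, T t (U x) := by
        rw [intervalIntegral.integral_add intervalIntegrable_const hTU,
          intervalIntegral.integral_const, add_sub_cancel_left, one_smul]
  have hdiff : ‖(∫ x in a + t..a + 1 + t, U x) - ∫ x in a..a + 1, U x‖ ≤ 2 * M * t :=
    norm_intervalIntegral_add_sub_le (by linarith) ht.le (hUi (by linarith) (by linarith))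
      fun x hx => hM x ⟨hx.1, by linarith [hx.2]⟩
  calc ‖U t‖ = ‖((∫ x in a + t..a + 1 + t, U x) - ∫ x in a..a + 1, U x)
        + ((∫ x in a..a + 1, U x) - T t (∫ x in a..a + 1, U x))‖ := by rw [hshift]; abel_nf
    _ ≤ _ := (norm_add_le _ _).trans (by gcongr)

theorem tendsto_nhdsGT_zero_of_cocycle [CompleteSpace E] (hT : ∀ t x, ‖T t x‖ ≤ ‖x‖)
    (hT0 : ∀ x, Tendsto (fun t => T t x) (𝓝[>] 0) (𝓝 x))
    (hU : ∀ s t, 0 < s → 0 < t → U (s + t) = U s + T s (U t)) (hUm : StronglyMeasurable U) :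
    Tendsto U (𝓝[>] 0) (𝓝 0) := by
  obtain ⟨M, hM⟩ := exists_forall_Icc_le_of_subadditive hUm.norm.measurable
    (fun s t hs ht => (hU s t hs ht ▸ norm_add_le _ _).trans (by gcongr; exact hT s (U t)))
    two_pos
  set v := ∫ x in 4..4 + 1, U x
  have hlim : Tendsto (fun t => 2 * M * t + ‖v - T t v‖) (𝓝[>] 0) (𝓝 0) := by
    have h1 : Tendsto (fun t : ℝ => 2 * M * t) (𝓝[>] 0) (𝓝 0) :=
      tendsto_nhdsWithin_of_tendsto_nhds (by simpa using (continuous_const_mul (2 * M)).tendsto 0)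
    simpa using h1.add ((hT0 v).const_sub v).norm
  refine squeeze_zero_norm' ?_ hlim
  filter_upwards [Ioc_mem_nhdsGT one_pos] with t ht
  exact norm_le_of_cocycle hU hUm four_pos
    (fun x hx => hM x ⟨by linarith [hx.1], by linarith [hx.2]⟩) ht.1 ht.2

theorem continuousOn_Ioi_of_cocycle [CompleteSpace E] (hT : ∀ t x, ‖T t x‖ ≤ ‖x‖)
    (hT0 : ∀ x, Tendsto (fun t => T t x) (𝓝[>] 0) (𝓝 x))
    (hU : ∀ s t, 0 < s → 0 < t → U (s + t) = U s + T s (U t)) (hUm : StronglyMeasurable U) :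
    ContinuousOn U (Ioi 0) := by
  have h0 := tendsto_nhdsGT_zero_of_cocycle hT hT0 hU hUm
  intro t ht
  refine (continuousAt_iff_continuous_left'_right'.2 ⟨?_, ?_⟩).continuousWithinAt
  · have hleft : Tendsto (t - ·) (𝓝[<] t) (𝓝[>] 0) := by
      rw [← sub_self t]; exact map_subLeft_nhdsLT.le
    rw [ContinuousWithinAt, ← tendsto_sub_nhds_zero_iff]
    refine squeeze_zero_norm' ?_ (tendsto_norm_zero.comp (h0.comp hleft))
    filter_upwards [Ioo_mem_nhdsLT ht] with x hx
    rw [norm_sub_rev]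
    exact norm_sub_le_of_cocycle hT hU hx.1 hx.2
  · have hright : Tendsto (· - t) (𝓝[>] t) (𝓝[>] 0) := by
      rw [← sub_self t]; exact map_subRight_nhdsGT.le
    rw [ContinuousWithinAt, ← tendsto_sub_nhds_zero_iff]
    refine squeeze_zero_norm' ?_ (tendsto_norm_zero.comp (h0.comp hright))
    filter_upwards [self_mem_nhdsWithin] with x hx
    exact norm_sub_le_of_cocycle hT hU ht hx

end Cocycle

namespace MeasureTheory.Lp

section ExtendByZero

variable {α E : Type*} [MeasurableSpace α] [NormedAddCommGroup E] {p : ℝ≥0∞}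
  {μ : Measure α} {s : Set α}

noncomputable def extendByZero (hs : MeasurableSet s) : Lp E p (μ.restrict s) →+ Lp E p μ :=
  AddMonoidHom.mk' (fun v => ((memLp_indicator_iff_restrict hs).2 (Lp.memLp v)).toLp _)
    fun v w => by
      rw [← MemLp.toLp_add]
      refine MemLp.toLp_congr _ _ ?_
      rw [← indicator_add']
      exact (ae_eq_restrict_iff_indicator_ae_eq hs).1 (Lp.coeFn_add v w)

theorem coeFn_extendByZero (hs : MeasurableSet s) (v : Lp E p (μ.restrict s)) :
    extendByZero hs v =ᵐ[μ] s.indicator v :=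
  ((memLp_indicator_iff_restrict hs).2 (Lp.memLp v)).coeFn_toLp

theorem isometry_extendByZero [Fact (1 ≤ p)] (hs : MeasurableSet s) :
    Isometry (extendByZero (E := E) (p := p) (μ := μ) hs) :=
  AddMonoidHomClass.isometry_of_norm _ fun v => by
    rw [extendByZero, AddMonoidHom.mk'_apply, Lp.norm_toLp,
      eLpNorm_indicator_eq_eLpNorm_restrict hs, Lp.norm_def]

end ExtendByZero

section Translate

variable {E : Type*} [NormedAddCommGroup E] [NormedSpace ℝ E] {p : ℝ≥0∞} [Fact (1 ≤ p)]

noncomputable def translate (t : ℝ) :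
    Lp E p (volume : Measure ℝ) →ₗᵢ[ℝ] Lp E p (volume : Measure ℝ) :=
  compMeasurePreservingₗᵢ (E := E) (p := p) ℝ (· - t) (measurePreserving_sub_right volume t)

theorem coeFn_translate (t : ℝ) (f : Lp E p (volume : Measure ℝ)) :
    ⇑(translate t f) =ᵐ[volume] fun x => f (x - t) :=
  coeFn_compMeasurePreserving f (measurePreserving_sub_right (volume : Measure ℝ) t)

theorem tendsto_translate (hp : p ≠ ∞) (f : Lp E p (volume : Measure ℝ)) :
    Tendsto (fun t => translate t f) (𝓝 0) (𝓝 f) := by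
  let g : ℝ → C(ℝ, ℝ) := fun t => ⟨(· - t), continuous_sub_right t⟩
  have hg : Continuous g :=
    ContinuousMap.continuous_of_continuous_uncurry _ (continuous_snd.sub continuous_fst)
  have h : Tendsto (fun t => translate t f) (𝓝 0) (𝓝 (translate 0 f)) :=
    (tendsto_const_nhds (x := f)).compMeasurePreservingLp (hg.tendsto 0)
      (fun t => measurePreserving_sub_right volume t) (measurePreserving_sub_right volume 0) hp
  rwa [show translate 0 f = f from
    Lp.ext ((coeFn_translate 0 f).trans (.of_eq (by simp only [sub_zero])))] at h

theorem extendByZero_eq_add_translate {u v w : Lp E p (volume.restrict (Ioi (0 : ℝ)))} {s : ℝ}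
    (hs : 0 ≤ s)
    (hw : w =ᵐ[volume.restrict (Ioi 0)] fun x => u x + if s ≤ x then v (x - s) else 0) :
    extendByZero measurableSet_Ioi w =
      extendByZero measurableSet_Ioi u + translate s (extendByZero measurableSet_Ioi v) := by
  have hv := (measurePreserving_sub_right volume s).quasiMeasurePreserving.ae_eq_comp
    (coeFn_extendByZero measurableSet_Ioi v)
  refine Lp.ext ?_
  filter_upwards [coeFn_extendByZero measurableSet_Ioi w,
    (ae_eq_restrict_iff_indicator_ae_eq measurableSet_Ioi).1 hw,
    Lp.coeFn_add (extendByZero measurableSet_Ioi u)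
      (translate s (extendByZero measurableSet_Ioi v)),
    coeFn_extendByZero measurableSet_Ioi u, coeFn_translate s (extendByZero measurableSet_Ioi v),
    hv, Measure.ae_ne volume s] with x hw hw' hadd hu htr hv hxs
  simp only [Function.comp_apply] at hv
  rw [hw, hw', hadd, Pi.add_apply, hu, htr, hv]
  simp only [indicator_apply, mem_Ioi, sub_pos]
  rcases hxs.lt_or_gt with hxs | hxs <;> split_ifs <;> first | rfl | (exfalso; linarith) | simp

end Translate

end MeasureTheory.Lp

/-- Let `{S_t}` be the right shift semigroup on `L²(0,∞)`. If `c : (0,∞) → L²(0,∞)` is weakly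
measurable and satisfies the additive cocycle relation `c(s+t) = c(s) + S_s c(t)` for all
`s, t > 0`, then `t ↦ c(t)` is norm continuous on `(0,∞)`. -/
theorem stmt_11
    (c : ℝ → Lp ℂ 2 (volume.restrict (Set.Ioi (0 : ℝ))))
    (hmeas : ∀ g : Lp ℂ 2 (volume.restrict (Set.Ioi (0 : ℝ))),
      Measurable fun t : ℝ => (inner ℂ (c t) g : ℂ))
    (hcoc : ∀ s t : ℝ, 0 < s → 0 < t →
      (c (s + t) : ℝ → ℂ) =ᵐ[volume.restrict (Set.Ioi (0 : ℝ))]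
        fun x => (c s : ℝ → ℂ) x + (if s ≤ x then (c t : ℝ → ℂ) (x - s) else 0)) :
    ContinuousOn c (Set.Ioi 0) := by
  -- makes `L²(0,∞)` second countable, which Pettis' argument needs
  have : Fact ((2 : ℝ≥0∞) ≠ ∞) := ⟨ENNReal.ofNat_ne_top⟩
  set ext := Lp.extendByZero (E := ℂ) (p := 2) (μ := volume) (measurableSet_Ioi (a := (0 : ℝ)))
  have hext : Isometry ext := Lp.isometry_extendByZero _
  have hU : ∀ s t, 0 < s → 0 < t →
      ext (c (s + t)) = ext (c s) + Lp.translate s (ext (c t)) := fun s t hs ht =>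
    Lp.extendByZero_eq_add_translate hs.le (hcoc s t hs ht)
  have hUm : StronglyMeasurable fun t => ext (c t) :=
    hext.continuous.comp_stronglyMeasurable (stronglyMeasurable_of_measurable_inner hmeas)
  refine hext.isEmbedding.isInducing.continuousOn_iff.2 ?_
  exact continuousOn_Ioi_of_cocycle (U := fun t => ext (c t))
    (T := fun s => (Lp.translate s).toContinuousLinearMap)
    (fun s f => (LinearIsometry.norm_map _ f).le)
    (fun f => (Lp.tendsto_translate ENNReal.ofNat_ne_top f).mono_left nhdsWithin_le_nhds) hU hUm
end

section
/- Let φ : (0,∞) → [0,∞) be a measurable function supported in (0,1) with ∫₀¹ φ(x) dx < ∞ and ∫₀¹ x φ(x)² dx < ∞. Then ∫₀¹ x (∫₀¹ φ(x + t) φ(t) dt)² dx ≤ (∫₀¹ φ(t) dt)² · ∫₀¹ x φ(x)² dx. In particular the left-hand side is finite. -/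
/-! With `f = ofReal ∘ φ`, Cauchy–Schwarz for the measure `f t dt` gives, for each `x`,
`(∫ f(x+t) f(t) dt)² ≤ (∫ f(x+t)² f(t) dt) · ∫ f`. Integrating against `x dx` and swapping the
integrals, the inner integral `∫ x f(x+t)² dx` is at most `∫ (x+t) f(x+t)² dx = ∫ y f(y)² dy`
since `t > 0`. This works on `(0, ∞)` for every measurable `f ≥ 0`. -/

open MeasureTheory Set
open scoped ENNReal

theorem ENNReal.sq_lintegral_mul_le {α : Type*} [MeasurableSpace α] (μ : Measure α)
    {f w : α → ℝ≥0∞} (hf : AEMeasurable f μ) (hw : AEMeasurable w μ) :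
    (∫⁻ a, f a * w a ∂μ) ^ 2 ≤ (∫⁻ a, f a ^ 2 * w a ∂μ) * ∫⁻ a, w a ∂μ := by
  have hsqrt : ∀ b : ℝ≥0∞, (b ^ (1 / 2 : ℝ)) ^ 2 = b := fun b => by
    simpa using ENNReal.rpow_inv_natCast_pow (n := 2) two_ne_zero b
  set s : α → ℝ≥0∞ := fun a => w a ^ (1 / 2 : ℝ)
  have hs : ∀ a, s a ^ 2 = w a := fun a => hsqrt (w a)
  have hsm : AEMeasurable s μ := hw.pow_const _
  have holder := ENNReal.lintegral_mul_le_Lp_mul_Lq μ .two_two (hf.mul hsm) hsm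
  simp only [Pi.mul_apply, ENNReal.rpow_two, mul_pow, hs] at holder
  calc (∫⁻ a, f a * w a ∂μ) ^ 2 = (∫⁻ a, f a * s a * s a ∂μ) ^ 2 := by
        simp_rw [mul_assoc, ← sq, hs]
    _ ≤ ((∫⁻ a, f a ^ 2 * w a ∂μ) ^ (1 / 2 : ℝ) * (∫⁻ a, w a ∂μ) ^ (1 / 2 : ℝ)) ^ 2 := by
        gcongr
    _ = (∫⁻ a, f a ^ 2 * w a ∂μ) * ∫⁻ a, w a ∂μ := by
        rw [mul_pow, hsqrt, hsqrt]

theorem lintegral_Ioi_ofReal_mul_comp_add_le (f : ℝ → ℝ≥0∞) {t : ℝ} (ht : 0 ≤ t) :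
    ∫⁻ x in Ioi 0, ENNReal.ofReal x * f (x + t) ≤ ∫⁻ y in Ioi 0, ENNReal.ofReal y * f y := by
  have hsupp : (fun y => ENNReal.ofReal y * f y).support ⊆ Ioi 0 := fun y hy => by
    by_contra h
    simp [ENNReal.ofReal_of_nonpos (not_lt.mp h)] at hy
  calc ∫⁻ x in Ioi 0, ENNReal.ofReal x * f (x + t)
      ≤ ∫⁻ x in Ioi 0, ENNReal.ofReal (x + t) * f (x + t) := by
        gcongr with x; linarith
    _ ≤ ∫⁻ x, ENNReal.ofReal (x + t) * f (x + t) := setLIntegral_le_lintegral _ _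
    _ = ∫⁻ y, ENNReal.ofReal y * f y :=
        lintegral_add_right_eq_self (fun y => ENNReal.ofReal y * f y) t
    _ = ∫⁻ y in Ioi 0, ENNReal.ofReal y * f y := (setLIntegral_eq_of_support_subset hsupp).symm

theorem lintegral_ofReal_mul_sq_autocorrelation_le {f : ℝ → ℝ≥0∞} (hf : Measurable f) :
    ∫⁻ x in Ioi 0, ENNReal.ofReal x * (∫⁻ t in Ioi 0, f (x + t) * f t) ^ 2
      ≤ (∫⁻ t in Ioi 0, f t) ^ 2 * ∫⁻ x in Ioi 0, ENNReal.ofReal x * f x ^ 2 := by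
  set C := ∫⁻ t in Ioi 0, f t
  set D := ∫⁻ x in Ioi 0, ENNReal.ofReal x * f x ^ 2
  have hK : Measurable (Function.uncurry fun x t : ℝ => ENNReal.ofReal x * f (x + t) ^ 2 * f t) :=
    by fun_prop
  calc ∫⁻ x in Ioi 0, ENNReal.ofReal x * (∫⁻ t in Ioi 0, f (x + t) * f t) ^ 2
      ≤ ∫⁻ x in Ioi 0, ENNReal.ofReal x * ((∫⁻ t in Ioi 0, f (x + t) ^ 2 * f t) * C) := by
        gcongr with x
        exact ENNReal.sq_lintegral_mul_le _ (hf.comp (measurable_const_add x)).aemeasurable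
          hf.aemeasurable
    _ = (∫⁻ x in Ioi 0, ∫⁻ t in Ioi 0, ENNReal.ofReal x * f (x + t) ^ 2 * f t) * C := by
        have hinner : Measurable fun x =>
            ∫⁻ t in Ioi 0, ENNReal.ofReal x * f (x + t) ^ 2 * f t := hK.lintegral_prod_right'
        rw [← lintegral_mul_const C hinner]
        refine lintegral_congr fun x => ?_
        simp only [mul_assoc]
        rw [lintegral_const_mul _ (by fun_prop), mul_assoc]
    _ = (∫⁻ t in Ioi 0, f t * ∫⁻ x in Ioi 0, ENNReal.ofReal x * f (x + t) ^ 2) * C := by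
        rw [lintegral_lintegral_swap hK.aemeasurable]
        refine congrArg (· * C) (lintegral_congr fun t => ?_)
        rw [mul_comm (f t), ← lintegral_mul_const _ (by fun_prop)]
    _ ≤ (∫⁻ t in Ioi 0, f t * D) * C := by
        refine mul_le_mul_left (setLIntegral_mono (by fun_prop) fun t ht => ?_) C
        gcongr
        exact lintegral_Ioi_ofReal_mul_comp_add_le (fun y => f y ^ 2) (le_of_lt ht)
    _ = C ^ 2 * D := by rw [lintegral_mul_const _ hf]; ring

theorem ENNReal.ofReal_integral_le_lintegral_ofReal {α : Type*} [MeasurableSpace α]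
    {μ : Measure α} {g : α → ℝ} (hg : 0 ≤ g) :
    ENNReal.ofReal (∫ a, g a ∂μ) ≤ ∫⁻ a, ENNReal.ofReal (g a) ∂μ := by
  rw [← Real.enorm_eq_ofReal (integral_nonneg hg)]
  simpa only [Real.enorm_eq_ofReal (hg _)] using enorm_integral_le_lintegral_enorm g

theorem setLIntegral_eq_of_support_subset_of_subset {α : Type*} [MeasurableSpace α]
    {μ : Measure α} {f : α → ℝ≥0∞} {s t : Set α} (hf : f.support ⊆ s) (hst : s ⊆ t) :
    ∫⁻ a in t, f a ∂μ = ∫⁻ a in s, f a ∂μ := by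
  rw [setLIntegral_eq_of_support_subset hf, setLIntegral_eq_of_support_subset (hf.trans hst)]

theorem stmt_13_general (φ : ℝ → ℝ) (hmeas : Measurable φ) (hpos : ∀ x : ℝ, 0 ≤ φ x)
    (hsupp : ∀ x : ℝ, x ∉ Set.Ioo (0 : ℝ) 1 → φ x = 0) :
    (∫⁻ x in Set.Ioo (0 : ℝ) 1,
        ENNReal.ofReal (x * (∫ t in Set.Ioo (0 : ℝ) 1, φ (x + t) * φ t) ^ 2))
      ≤ (∫⁻ t in Set.Ioo (0 : ℝ) 1, ENNReal.ofReal (φ t)) ^ 2 *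
        ∫⁻ x in Set.Ioo (0 : ℝ) 1, ENNReal.ofReal (x * φ x ^ 2) := by
  set Φ : ℝ → ℝ≥0∞ := fun y => ENNReal.ofReal (φ y)
  have hweight : ∀ x, ENNReal.ofReal (x * φ x ^ 2) = ENNReal.ofReal x * Φ x ^ 2 := fun x => by
    rw [ENNReal.ofReal_mul' (sq_nonneg _), ENNReal.ofReal_pow (hpos x)]
  have hcorr : ∀ x, ENNReal.ofReal (x * (∫ t in Ioo 0 1, φ (x + t) * φ t) ^ 2)
      ≤ ENNReal.ofReal x * (∫⁻ t in Ioi 0, Φ (x + t) * Φ t) ^ 2 := fun x => by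
    have hprod : 0 ≤ fun t => φ (x + t) * φ t := fun t => mul_nonneg (hpos _) (hpos _)
    rw [ENNReal.ofReal_mul' (sq_nonneg _), ENNReal.ofReal_pow (integral_nonneg hprod)]
    gcongr
    calc ENNReal.ofReal (∫ t in Ioo 0 1, φ (x + t) * φ t)
        ≤ ∫⁻ t in Ioo 0 1, ENNReal.ofReal (φ (x + t) * φ t) :=
          ENNReal.ofReal_integral_le_lintegral_ofReal hprod
      _ ≤ ∫⁻ t in Ioi 0, ENNReal.ofReal (φ (x + t) * φ t) := lintegral_mono_set Ioo_subset_Ioi_self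
      _ = ∫⁻ t in Ioi 0, Φ (x + t) * Φ t := by simp only [ENNReal.ofReal_mul (hpos _), Φ]
  have hΦ : ∀ y ∉ Ioo 0 1, Φ y = 0 := fun y hy => by simp [Φ, hsupp y hy]
  calc ∫⁻ x in Ioo 0 1, ENNReal.ofReal (x * (∫ t in Ioo 0 1, φ (x + t) * φ t) ^ 2)
      ≤ ∫⁻ x in Ioi 0, ENNReal.ofReal x * (∫⁻ t in Ioi 0, Φ (x + t) * Φ t) ^ 2 :=
        (lintegral_mono hcorr).trans (lintegral_mono_set Ioo_subset_Ioi_self)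
    _ ≤ (∫⁻ t in Ioi 0, Φ t) ^ 2 * ∫⁻ x in Ioi 0, ENNReal.ofReal x * Φ x ^ 2 :=
        lintegral_ofReal_mul_sq_autocorrelation_le hmeas.ennreal_ofReal
    _ = (∫⁻ t in Ioo 0 1, Φ t) ^ 2 * ∫⁻ x in Ioo 0 1, ENNReal.ofReal (x * φ x ^ 2) := by
        simp only [hweight]
        rw [setLIntegral_eq_of_support_subset_of_subset (Function.support_subset_iff'.2 hΦ)
            Ioo_subset_Ioi_self,
          setLIntegral_eq_of_support_subset_of_subset
            (Function.support_subset_iff'.2 fun y hy => by simp [hΦ y hy]) Ioo_subset_Ioi_self]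

/-- For a nonnegative measurable `φ` supported in `(0,1)` with `∫₀¹ φ < ∞` and
`∫₀¹ x φ(x)² dx < ∞`, one has
`∫₀¹ x (∫₀¹ φ(x+t) φ(t) dt)² dx ≤ (∫₀¹ φ)² ∫₀¹ x φ(x)² dx`; in particular the left-hand
side is finite. -/
theorem stmt_13 (φ : ℝ → ℝ) (hmeas : Measurable φ) (hpos : ∀ x : ℝ, 0 ≤ φ x)
    (hsupp : ∀ x : ℝ, x ∉ Set.Ioo (0 : ℝ) 1 → φ x = 0)
    (hL1 : (∫⁻ x in Set.Ioo (0 : ℝ) 1, ENNReal.ofReal (φ x)) < ⊤)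
    (hL2w : (∫⁻ x in Set.Ioo (0 : ℝ) 1, ENNReal.ofReal (x * φ x ^ 2)) < ⊤) :
    (∫⁻ x in Set.Ioo (0 : ℝ) 1,
        ENNReal.ofReal (x * (∫ t in Set.Ioo (0 : ℝ) 1, φ (x + t) * φ t) ^ 2))
      ≤ (∫⁻ t in Set.Ioo (0 : ℝ) 1, ENNReal.ofReal (φ t)) ^ 2 *
        ∫⁻ x in Set.Ioo (0 : ℝ) 1, ENNReal.ofReal (x * φ x ^ 2) :=
  stmt_13_general φ hmeas hpos hsupp
end

section
/- Let U be a bounded open subset of (0,∞) and let ψ : ℝ → ℂ be a measurable function supported in [−1, 1] and even (ψ(−s) = ψ(s) for a.e. s). Then ∫_{(0,∞)∖U} ∫_U |ψ(x − y)|² dy dx = ∫₀¹ |ψ(s)|² ( |(U + s) △ U| − |[0, s] ∩ U| ) ds, where both sides may be infinite. -/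
open MeasureTheory
open scoped ENNReal NNReal

lemma aux_measure (U : Set ℝ) (hUopen : IsOpen U) (hUsub : U ⊆ Set.Ioi 0)
    {s : ℝ} (hs : 0 < s) :
    volume ((fun x => x - s) ⁻¹' U ∩ (Set.Ioi 0 \ U))
      + volume ((fun x => x - (-s)) ⁻¹' U ∩ (Set.Ioi 0 \ U))
      = volume (symmDiff ((fun x => x - s) ⁻¹' U) U) - volume (Set.Icc 0 s ∩ U) := by
  set P : Set ℝ := (fun x => x - s) ⁻¹' U with hP
  have hPmeas : MeasurableSet P := (hUopen.measurableSet).preimage (measurable_id.sub_const s)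
  have hUmeas : MeasurableSet U := hUopen.measurableSet
  have hPsub : P ⊆ Set.Ioi 0 := by
    intro x hx
    have : x - s ∈ Set.Ioi 0 := hUsub hx
    simp only [Set.mem_Ioi] at this ⊢
    linarith
  have ha : P ∩ (Set.Ioi 0 \ U) = P \ U := by
    ext x
    constructor
    · rintro ⟨hx, -, hxu⟩; exact ⟨hx, hxu⟩
    · rintro ⟨hx, hxu⟩; exact ⟨hx, hPsub hx, hxu⟩
  have hb : (fun x => x - (-s)) ⁻¹' U ∩ (Set.Ioi 0 \ U)
      = (fun x => x + s) ⁻¹' ((U ∩ Set.Ioi s) \ P) := by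
    ext x
    simp only [Set.mem_inter_iff, Set.mem_diff, Set.mem_preimage, Set.mem_Ioi, hP,
      sub_neg_eq_add, add_sub_cancel_right]
    constructor
    · rintro ⟨h1, h2, h3⟩; exact ⟨⟨h1, by linarith⟩, h3⟩
    · rintro ⟨⟨h1, h2⟩, h3⟩; exact ⟨h1, by linarith, h3⟩
  have hbvol : volume ((fun x => x - (-s)) ⁻¹' U ∩ (Set.Ioi 0 \ U))
      = volume ((U ∩ Set.Ioi s) \ P) := by
    rw [hb, measure_preimage_add_right]
  have hsubset : Set.Icc 0 s ∩ U ⊆ U \ P := by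
    rintro x ⟨⟨-, hxs⟩, hxU⟩
    refine ⟨hxU, fun hxP => ?_⟩
    have : x - s ∈ Set.Ioi 0 := hUsub hxP
    simp only [Set.mem_Ioi] at this
    linarith
  have hc : (U ∩ Set.Ioi s) \ P = (U \ P) \ (Set.Icc 0 s ∩ U) := by
    ext x
    simp only [Set.mem_diff, Set.mem_inter_iff, Set.mem_Ioi, Set.mem_Icc]
    constructor
    · rintro ⟨⟨h1, h2⟩, h3⟩
      exact ⟨⟨h1, h3⟩, fun h => by linarith [h.1.2]⟩
    · rintro ⟨⟨h1, h2⟩, h3⟩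
      refine ⟨⟨h1, ?_⟩, h2⟩
      by_contra hle
      push_neg at hle
      exact h3 ⟨⟨le_of_lt (hUsub h1), hle⟩, h1⟩
  have hfin : volume (Set.Icc 0 s ∩ U) ≠ ⊤ := by
    refine (lt_of_le_of_lt (measure_mono Set.inter_subset_left) ?_).ne
    simp [Real.volume_Icc]
  have hcvol : volume ((U ∩ Set.Ioi s) \ P)
      = volume (U \ P) - volume (Set.Icc 0 s ∩ U) := by
    rw [hc]
    exact measure_diff hsubset ((measurableSet_Icc.inter hUmeas).nullMeasurableSet) hfin
  have hd : volume (symmDiff P U) = volume (P \ U) + volume (U \ P) := by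
    rw [Set.symmDiff_def]
    exact measure_union disjoint_sdiff_sdiff (hUmeas.diff hPmeas)
  rw [ha, hbvol, hcvol, hd,
    (ENNReal.cancel_of_ne hfin).add_tsub_assoc_of_le (measure_mono hsubset)]

/-- Let `U` be a bounded open subset of `(0,∞)` and `ψ` a measurable even function supported
in `[-1,1]`. Then
`∫_{(0,∞)∖U} ∫_U |ψ(x-y)|² dy dx = ∫₀¹ |ψ(s)|² (|(U+s) △ U| - |[0,s] ∩ U|) ds`,
where both sides may be infinite. -/
theorem stmt_15 (U : Set ℝ) (hUopen : IsOpen U) (hUsub : U ⊆ Set.Ioi 0)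
    (hUbdd : Bornology.IsBounded U)
    (ψ : ℝ → ℂ) (hmeas : Measurable ψ)
    (hsupp : ∀ x : ℝ, x ∉ Set.Icc (-1 : ℝ) 1 → ψ x = 0)
    (heven : ∀ᵐ s ∂volume, ψ (-s) = ψ s) :
    (∫⁻ x in Set.Ioi (0 : ℝ) \ U, ∫⁻ y in U, (‖ψ (x - y)‖₊ : ℝ≥0∞) ^ 2)
      = ∫⁻ s in Set.Ioo (0 : ℝ) 1, (‖ψ s‖₊ : ℝ≥0∞) ^ 2 *
          (volume (symmDiff ((fun u => u + s) '' U) U) - volume (Set.Icc 0 s ∩ U)) := by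
  classical
  have hUmeas : MeasurableSet U := hUopen.measurableSet
  set F : ℝ → ℝ≥0∞ := fun s => (‖ψ s‖₊ : ℝ≥0∞) ^ 2 with hF
  have hFmeas : Measurable F := by
    exact (hmeas.nnnorm.coe_nnreal_ennreal).pow_const 2
  set A : Set ℝ := Set.Ioi (0 : ℝ) \ U with hA
  have hAmeas : MeasurableSet A := measurableSet_Ioi.diff hUmeas
  set χ : ℝ → ℝ≥0∞ := U.indicator 1 with hχ
  have hχmeas : Measurable χ := measurable_one.indicator hUmeas
  -- the translated-set identity
  have hT : ∀ s : ℝ, (fun u => u + s) '' U = (fun x => x - s) ⁻¹' U := by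
    intro s
    ext x
    simp only [Set.mem_image, Set.mem_preimage]
    constructor
    · rintro ⟨u, hu, rfl⟩; simpa using hu
    · intro h; exact ⟨x - s, h, by ring⟩
  have hPmeas : ∀ s : ℝ, MeasurableSet ((fun x => x - s) ⁻¹' U) := fun s =>
    hUmeas.preimage (measurable_id.sub_const s)
  -- Step 1 : inner integral as a full-line integral
  have step1 : ∀ x : ℝ, (∫⁻ y in U, F (x - y)) = ∫⁻ s, F s * χ (x - s) := by
    intro x
    have h1 : ∀ y, U.indicator (fun y => F (x - y)) y = F (x - y) * χ y := by
      intro y; by_cases hy : y ∈ U <;> simp [hχ, Set.indicator, hy]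
    calc (∫⁻ y in U, F (x - y))
        = ∫⁻ y, U.indicator (fun y => F (x - y)) y := (lintegral_indicator hUmeas _).symm
      _ = ∫⁻ y, F (x - y) * χ y := by simp only [h1]
      _ = ∫⁻ s, F (x - (x - s)) * χ (x - s) :=
          ((Measure.measurePreserving_sub_left volume x).lintegral_comp
            (((hFmeas.comp (measurable_const.sub measurable_id)).mul hχmeas))).symm
      _ = ∫⁻ s, F s * χ (x - s) := by simp [sub_sub_cancel]
  -- m s : the translated overlap measure
  set m : ℝ → ℝ≥0∞ := fun s => volume ((fun x => x - s) ⁻¹' U ∩ A) with hm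
  have hminner : ∀ s : ℝ, (∫⁻ x in A, χ (x - s)) = m s := by
    intro s
    have h2 : ∀ x : ℝ, χ (x - s) = ((fun x => x - s) ⁻¹' U).indicator 1 x := by
      intro x; by_cases h : x - s ∈ U <;> simp [hχ, Set.indicator, h]
    simp_rw [h2]
    rw [lintegral_indicator_one (hPmeas s), Measure.restrict_apply (hPmeas s)]
  have hmmeas : Measurable m := by
    have h1 : Measurable fun p : ℝ × ℝ => χ (p.2 - p.1) :=
      hχmeas.comp (measurable_snd.sub measurable_fst)
    have h2 : Measurable fun s : ℝ => ∫⁻ x, χ (x - s) ∂(volume.restrict A) :=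
      h1.lintegral_prod_right'
    have h3 : m = fun s => ∫⁻ x in A, χ (x - s) := funext fun s => (hminner s).symm
    rw [h3]
    exact h2
  -- Step 2 : Tonelli
  have step2 : (∫⁻ x in A, ∫⁻ y in U, F (x - y)) = ∫⁻ s, F s * m s := by
    have hker : Measurable (fun p : ℝ × ℝ => F p.2 * χ (p.1 - p.2)) :=
      (hFmeas.comp measurable_snd).mul (hχmeas.comp (measurable_fst.sub measurable_snd))
    calc (∫⁻ x in A, ∫⁻ y in U, F (x - y))
        = ∫⁻ x in A, ∫⁻ s, F s * χ (x - s) := by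
          exact lintegral_congr fun x => step1 x
      _ = ∫⁻ s, ∫⁻ x in A, F s * χ (x - s) := lintegral_lintegral_swap hker.aemeasurable
      _ = ∫⁻ s, F s * ∫⁻ x in A, χ (x - s) := by
          exact lintegral_congr fun s =>
            lintegral_const_mul (F s) (hχmeas.comp (measurable_id.sub_const s))
      _ = ∫⁻ s, F s * m s := by simp only [hminner]
  set G : ℝ → ℝ≥0∞ := fun s => F s * m s with hG
  have hGmeas : Measurable G := hFmeas.mul hmmeas
  -- Step 3 : restrict to S = Ioo (-1) 0 ∪ Ioo 0 1
  set S : Set ℝ := Set.Ioo (-1 : ℝ) 0 ∪ Set.Ioo 0 1 with hS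
  have hSmeas : MeasurableSet S := measurableSet_Ioo.union measurableSet_Ioo
  have hnull : volume ({-1, 0, 1} : Set ℝ) = 0 :=
    (Set.toFinite ({-1, 0, 1} : Set ℝ)).measure_zero _
  have h30 : ∀ᵐ s ∂volume, s ∉ S → G s = 0 := by
    filter_upwards [measure_eq_zero_iff_ae_notMem.mp hnull] with s hs hns
    have hψ : ψ s = 0 := by
      apply hsupp
      intro hIcc
      simp only [Set.mem_insert_iff, Set.mem_singleton_iff] at hs
      push_neg at hs
      obtain ⟨h1, h2, h3⟩ := hs
      rcases lt_trichotomy s 0 with h | h | h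
      · exact hns (Or.inl ⟨lt_of_le_of_ne hIcc.1 (Ne.symm h1), h⟩)
      · exact h2 h
      · exact hns (Or.inr ⟨h, lt_of_le_of_ne hIcc.2 h3⟩)
    simp [hG, hF, hψ]
  have step3 : (∫⁻ s, G s) = ∫⁻ s in S, G s := by
    rw [← lintegral_indicator hSmeas]
    refine lintegral_congr_ae ?_
    filter_upwards [h30] with s h
    by_cases hsS : s ∈ S
    · simp [hsS]
    · simp [hsS, h hsS]
  have hdisj : Disjoint (Set.Ioo (-1 : ℝ) 0) (Set.Ioo (0 : ℝ) 1) :=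
    Set.Ioo_disjoint_Ioo.mpr (by norm_num)
  have step3b : (∫⁻ s in S, G s)
      = (∫⁻ s in Set.Ioo (-1 : ℝ) 0, G s) + ∫⁻ s in Set.Ioo (0 : ℝ) 1, G s := by
    rw [hS, lintegral_union measurableSet_Ioo hdisj]
  -- Step 4 : reflect the negative part
  have step4 : (∫⁻ s in Set.Ioo (-1 : ℝ) 0, G s)
      = ∫⁻ s in Set.Ioo (0 : ℝ) 1, G (-s) := by
    have hmp : MeasurePreserving (Neg.neg : ℝ → ℝ) volume volume :=
      Measure.measurePreserving_neg volume
    have hemb : MeasurableEmbedding (Neg.neg : ℝ → ℝ) :=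
      (Homeomorph.neg ℝ).measurableEmbedding
    calc (∫⁻ s in Set.Ioo (-1 : ℝ) 0, G s)
        = ∫⁻ s, (Set.Ioo (-1 : ℝ) 0).indicator G s := (lintegral_indicator measurableSet_Ioo _).symm
      _ = ∫⁻ s, (Set.Ioo (-1 : ℝ) 0).indicator G (-s) :=
          (hmp.lintegral_comp_emb hemb _).symm
      _ = ∫⁻ s, (Set.Ioo (0 : ℝ) 1).indicator (fun t => G (-t)) s := by
          refine lintegral_congr fun s => ?_
          by_cases hs : s ∈ Set.Ioo (0 : ℝ) 1
          · have hns : -s ∈ Set.Ioo (-1 : ℝ) 0 := by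
              simp only [Set.mem_Ioo] at hs ⊢
              constructor <;> linarith [hs.1, hs.2]
            simp [hs, hns]
          · have hns : -s ∉ Set.Ioo (-1 : ℝ) 0 := by
              simp only [Set.mem_Ioo] at hs ⊢
              intro h
              exact hs ⟨by linarith [h.2], by linarith [h.1]⟩
            simp [hs, hns]
      _ = ∫⁻ s in Set.Ioo (0 : ℝ) 1, G (-s) := lintegral_indicator measurableSet_Ioo _
  -- Step 5 : combine
  have step5 : (∫⁻ s in Set.Ioo (0 : ℝ) 1, G (-s)) + (∫⁻ s in Set.Ioo (0 : ℝ) 1, G s)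
      = ∫⁻ s in Set.Ioo (0 : ℝ) 1, (G (-s) + G s) :=
    (lintegral_add_left (hGmeas.comp measurable_neg) _).symm
  -- Step 6 : final identification
  have hevenF : ∀ᵐ s ∂volume, F (-s) = F s := by
    filter_upwards [heven] with s h
    simp [hF, h]
  have step6 : (∫⁻ s in Set.Ioo (0 : ℝ) 1, (G (-s) + G s))
      = ∫⁻ s in Set.Ioo (0 : ℝ) 1, F s *
          (volume (symmDiff ((fun u => u + s) '' U) U) - volume (Set.Icc 0 s ∩ U)) := by
    refine lintegral_congr_ae ?_
    filter_upwards [ae_restrict_of_ae hevenF, ae_restrict_mem measurableSet_Ioo] with s he hsm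
    have hs0 : 0 < s := hsm.1
    have key := aux_measure U hUopen hUsub hs0
    calc G (-s) + G s = F s * (m s + m (-s)) := by
          simp only [hG]
          rw [he]
          ring
      _ = F s * (volume (symmDiff ((fun x => x - s) ⁻¹' U) U)
            - volume (Set.Icc 0 s ∩ U)) := congrArg (F s * ·) key
      _ = F s * (volume (symmDiff ((fun u => u + s) '' U) U)
            - volume (Set.Icc 0 s ∩ U)) := by rw [hT s]
  show (∫⁻ x in A, ∫⁻ y in U, F (x - y))
      = ∫⁻ s in Set.Ioo (0 : ℝ) 1, F s *
          (volume (symmDiff ((fun u => u + s) '' U) U) - volume (Set.Icc 0 s ∩ U))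
  rw [step2, step3, step3b, step4, step5, step6]
end

section
/- Let f : (0,∞) → (0,∞) be a continuous, strictly decreasing function with lim_{x→0⁺} f(x) = ∞, lim_{x→∞} f(x) = 0, and ∫₀¹ f(x) dx < ∞. Then for every integer n ≥ 0, Σ_{k=n+1}^∞ f⁻¹(k) ≤ ∫₀^{f⁻¹(n+1)} f(s) ds − n · f⁻¹(n+1); in particular the series Σ_{k=1}^∞ f⁻¹(k) converges. -/
open MeasureTheory Filter Set Finset
open scoped Topology

/-!
If `x ≤ g k` then `f x ≥ k`, so on `(0, g (n+1)]` the function `f` dominates the staircase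
`n + #{k ≥ n + 1 | x ≤ g k}`, whose integral is `n g(n+1) + Σ_{k > n} g k`. Integrating over the
strips `(g (k+1), g k]` one at a time turns this into an induction on the number of strips.
-/

theorem AntitoneOn.of_strictAntiOn_rightInv {α β : Type*} [LinearOrder α] [LinearOrder β]
    {f : α → β} {g : β → α} {s : Set α} {t : Set β} (hf : StrictAntiOn f s)
    (hg : ∀ y ∈ t, g y ∈ s ∧ f (g y) = y) : AntitoneOn g t := by
  intro y hy z hz hyz
  refine (hf.le_iff_ge (hg y hy).1 (hg z hz).1).1 ?_
  rwa [(hg y hy).2, (hg z hz).2]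

theorem IntegrableOn.intervalIntegrable_of_continuousOn_Ioi {μ : Measure ℝ}
    [IsLocallyFiniteMeasure μ] {f : ℝ → ℝ} {a b c : ℝ} (hab : a < b)
    (hf : IntegrableOn f (Ioo a b) μ) (hfc : ContinuousOn f (Ioi a)) (hac : a ≤ c) :
    IntervalIntegrable f μ a c := by
  rw [intervalIntegrable_iff_integrableOn_Ioc_of_le hac]
  have hsub : Ioc a c ⊆ Ioo a b ∪ Icc b c := fun x hx =>
    (lt_or_ge x b).imp (fun h => ⟨hx.1, h⟩) (fun h => ⟨h, hx.2⟩)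
  exact (hf.union ((hfc.mono fun x hx => hab.trans_le hx.1).integrableOn_Icc)).mono_set hsub

theorem mul_sub_le_intervalIntegral {f : ℝ → ℝ} {a b c : ℝ} (hab : a ≤ b)
    (hf : IntervalIntegrable f volume a b) (hc : ∀ x ∈ Ioo a b, c ≤ f x) :
    c * (b - a) ≤ ∫ x in a..b, f x := by
  simpa [mul_comm] using
    intervalIntegral.integral_mono_on_of_le_Ioo hab intervalIntegrable_const hf hc

theorem sum_range_add_mul_le_intervalIntegral {f : ℝ → ℝ} {b : ℕ → ℝ} {c : ℝ}
    (hb : Antitone b) (hb0 : ∀ k, 0 ≤ b k) (hf : IntervalIntegrable f volume 0 (b 0))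
    (hfb : ∀ k : ℕ, ∀ x ∈ Ioo 0 (b k), c + k + 1 ≤ f x) (N : ℕ) :
    ∑ k ∈ range N, b k + c * b 0 ≤ ∫ x in 0..b 0, f x := by
  induction N generalizing b c with
  | zero =>
    simpa using mul_sub_le_intervalIntegral (hb0 0) hf fun x hx => by linarith [hfb 0 x hx]
  | succ N ih =>
    have hb10 : b 1 ≤ b 0 := hb zero_le_one
    have hf1 : IntervalIntegrable f volume 0 (b 1) :=
      hf.mono_set (uIcc_subset_uIcc_left (by simp [uIcc_of_le (hb0 0), hb0 1, hb10]))
    have hf10 : IntervalIntegrable f volume (b 1) (b 0) :=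
      hf.mono_set (uIcc_subset_uIcc_right (by simp [uIcc_of_le (hb0 0), hb0 1, hb10]))
    have head : ∑ k ∈ range N, b (k + 1) + (c + 1) * b 1 ≤ ∫ x in 0..b 1, f x :=
      ih (fun i j h => hb (Nat.succ_le_succ h)) (fun k => hb0 _) hf1 fun k x hx => by
        have := hfb (k + 1) x hx
        push_cast at this
        linarith
    have strip : (c + 1) * (b 0 - b 1) ≤ ∫ x in b 1..b 0, f x :=
      mul_sub_le_intervalIntegral hb10 hf10 fun x hx => by
        simpa using hfb 0 x ⟨(hb0 1).trans_lt hx.1, hx.2⟩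
    rw [Finset.sum_range_succ', ← intervalIntegral.integral_add_adjacent_intervals hf1 hf10]
    linarith

theorem summable_and_tsum_add_mul_le_intervalIntegral {f : ℝ → ℝ} {b : ℕ → ℝ} {c : ℝ}
    (hb : Antitone b) (hb0 : ∀ k, 0 ≤ b k) (hf : IntervalIntegrable f volume 0 (b 0))
    (hfb : ∀ k : ℕ, ∀ x ∈ Ioo 0 (b k), c + k + 1 ≤ f x) :
    Summable b ∧ ∑' k, b k ≤ (∫ x in 0..b 0, f x) - c * b 0 := by
  have hsum : ∀ N, ∑ k ∈ range N, b k ≤ (∫ x in 0..b 0, f x) - c * b 0 := fun N => by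
    linarith [sum_range_add_mul_le_intervalIntegral hb hb0 hf hfb N]
  have hs := summable_of_sum_range_le hb0 hsum
  exact ⟨hs, hs.tsum_le_of_sum_range_le hsum⟩

theorem stmt_19_general (f g : ℝ → ℝ)
    (hfcont : ContinuousOn f (Set.Ioi 0))
    (hfanti : StrictAntiOn f (Set.Ioi 0))
    (hfint : IntegrableOn f (Set.Ioo 0 1) volume)
    (hginv : ∀ y : ℝ, 0 < y → 0 < g y ∧ f (g y) = y) :
    (∀ n : ℕ,
      (Summable fun k : ℕ => g ((k : ℝ) + (n : ℝ) + 1)) ∧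
      (∑' k : ℕ, g ((k : ℝ) + (n : ℝ) + 1))
        ≤ (∫ s in Set.Ioo (0 : ℝ) (g ((n : ℝ) + 1)), f s) - (n : ℝ) * g ((n : ℝ) + 1)) ∧
    Summable fun k : ℕ => g ((k : ℝ) + 1) := by
  have hganti : AntitoneOn g (Ioi 0) := .of_strictAntiOn_rightInv hfanti hginv
  have hfg : ∀ y : ℝ, 0 < y → ∀ x ∈ Ioo 0 (g y), y ≤ f x := fun y hy x hx =>
    (hginv y hy).2 ▸ hfanti.antitoneOn hx.1 (hginv y hy).1 hx.2.le
  have key : ∀ n : ℕ, Summable (fun k : ℕ => g (k + n + 1)) ∧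
      ∑' k : ℕ, g (k + n + 1) ≤ (∫ x in 0..g (n + 1), f x) - n * g (n + 1) := by
    intro n
    have hf : IntervalIntegrable f volume 0 (g (n + 1)) :=
      IntegrableOn.intervalIntegrable_of_continuousOn_Ioi one_pos hfint hfcont
        (hginv _ (by positivity)).1.le
    simpa using summable_and_tsum_add_mul_le_intervalIntegral (f := f) (c := n)
      (b := fun k : ℕ => g (k + n + 1))
      (fun i j h => hganti (mem_Ioi.2 (by positivity)) (mem_Ioi.2 (by positivity))
        (by gcongr))
      (fun k => (hginv _ (by positivity)).1.le) (by simpa using hf) fun k x hx => by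
        linarith [hfg _ (by positivity) x hx]
  refine ⟨fun n => ?_, by simpa using (key 0).1⟩
  rw [← integral_Ioc_eq_integral_Ioo,
    ← intervalIntegral.integral_of_le (hginv _ (by positivity)).1.le]
  exact key n

/-- Let `f : (0,∞) → (0,∞)` be continuous, strictly decreasing, with `f → ∞` at `0⁺`,
`f → 0` at `∞`, and `∫₀¹ f < ∞`, and let `g = f⁻¹` be its inverse. Then for every `n ≥ 0`,
`Σ_{k=n+1}^∞ f⁻¹(k) ≤ ∫₀^{f⁻¹(n+1)} f(s) ds - n f⁻¹(n+1)` (the series being summable);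
in particular `Σ_{k=1}^∞ f⁻¹(k)` converges. -/
theorem stmt_19 (f g : ℝ → ℝ)
    (hfpos : ∀ x : ℝ, 0 < x → 0 < f x)
    (hfcont : ContinuousOn f (Set.Ioi 0))
    (hfanti : StrictAntiOn f (Set.Ioi 0))
    (hf0 : Tendsto f (𝓝[>] (0 : ℝ)) atTop)
    (hfinf : Tendsto f atTop (𝓝 0))
    (hfint : IntegrableOn f (Set.Ioo 0 1) volume)
    (hginv : ∀ y : ℝ, 0 < y → 0 < g y ∧ f (g y) = y) :
    (∀ n : ℕ,
      (Summable fun k : ℕ => g ((k : ℝ) + (n : ℝ) + 1)) ∧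
      (∑' k : ℕ, g ((k : ℝ) + (n : ℝ) + 1))
        ≤ (∫ s in Set.Ioo (0 : ℝ) (g ((n : ℝ) + 1)), f s) - (n : ℝ) * g ((n : ℝ) + 1)) ∧
    Summable fun k : ℕ => g ((k : ℝ) + 1) :=
  stmt_19_general f g hfcont hfanti hfint hginv
end
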